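/- arXiv:1903.07261 — 17 statements merged into one kernel-verified Lean document; each statement's English description precedes it below -/
import Mathlib

section
/- Suppose the monitoring sets are pairwise disjoint. Then there exists at least one strategy profile (σ_1*, σ_2*) satisfying conditions (4)–(5), i.e., there exists a probability distribution σ_1* on {V ⊆ 𝒱 : |V| ≤ b_1} whose marginals satisfy ρ_{σ_1*}(v_j) = 1 − (p−b_1)/(w_{e*_j} S_p) for j ≤ p and ρ_{σ_1*}(v_j) = 0 for j > p, and a probability distribution σ_2* on ℰ with σ_2*(e) = 1/(w_e S_p) for e ∈ E_p and σ_2*(e) = 0 otherwise. -/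
open Finset

private lemma rep_aux : ∀ (k : ℕ) {n b : ℕ} (x : Fin n → ℝ),
    ((univ : Finset (Fin n)).filter (fun i => x i ≠ 0 ∧ x i ≠ 1)).card ≤ k →
    (∀ j, 0 ≤ x j) → (∀ j, x j ≤ 1) → (∑ j, x j = (b : ℝ)) →
    ∃ σ : Finset (Fin n) → ℝ, (∀ S, 0 ≤ σ S) ∧ (∑ S : Finset (Fin n), σ S = 1) ∧
      (∀ S, σ S ≠ 0 → S.card ≤ b) ∧
      (∀ j, (∑ S : Finset (Fin n), if j ∈ S then σ S else 0) = x j) := by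
  intro k
  induction k with
  | zero =>
    intro n b x hcard h0 h1 hsum
    have hall : ∀ i, x i = 0 ∨ x i = 1 := by
      intro i
      by_contra h
      push_neg at h
      have hmem : i ∈ (univ : Finset (Fin n)).filter (fun i => x i ≠ 0 ∧ x i ≠ 1) := by
        simp [h.1, h.2]
      have := Finset.card_pos.mpr ⟨i, hmem⟩
      omega
    set S := (univ : Finset (Fin n)).filter (fun i => x i = 1) with hS
    have hxS : ∀ i, x i = if i ∈ S then (1:ℝ) else 0 := by
      intro i
      by_cases hi : i ∈ S
      · simp only [hS, mem_filter, mem_univ, true_and] at hi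
        simp [hS, hi]
      · simp only [hS, mem_filter, mem_univ, true_and] at hi
        rcases hall i with h | h
        · simp [h, hS, hi]
        · exact absurd h hi
    have hcardS : S.card = b := by
      have : (S.card : ℝ) = (b : ℝ) := by
        rw [← hsum, Finset.sum_congr rfl (fun i _ => hxS i)]
        simp
      exact_mod_cast this
    refine ⟨fun T => if T = S then 1 else 0, ?_, ?_, ?_, ?_⟩
    · intro T; dsimp only; split <;> norm_num
    · simp
    · intro T hT
      dsimp only at hT
      have hTS : T = S := by by_contra h; simp [h] at hT
      rw [hTS, hcardS]
    · intro j
      dsimp only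
      have hc : ∀ T ∈ (univ : Finset (Finset (Fin n))),
          (if j ∈ T then (if T = S then (1:ℝ) else 0) else 0) =
          if T = S then (if j ∈ S then (1:ℝ) else 0) else 0 := by
        intro T _
        by_cases hT : T = S <;> simp [hT]
      rw [Finset.sum_congr rfl hc]
      simp [hxS j]
  | succ k ih =>
    intro n b x hcard h0 h1 hsum
    by_cases hk : ((univ : Finset (Fin n)).filter (fun i => x i ≠ 0 ∧ x i ≠ 1)).card ≤ k
    · exact ih x hk h0 h1 hsum
    push_neg at hk
    have hne : ((univ : Finset (Fin n)).filter (fun i => x i ≠ 0 ∧ x i ≠ 1)).Nonempty :=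
      Finset.card_pos.mp (by omega)
    obtain ⟨i, hi⟩ := hne
    have hifrac : x i ≠ 0 ∧ x i ≠ 1 := (Finset.mem_filter.mp hi).2
    have hsecond : ∃ j, j ≠ i ∧ x j ≠ 0 ∧ x j ≠ 1 := by
      by_contra h
      push_neg at h
      have hsplit : ∑ l ∈ (univ : Finset (Fin n)).erase i, x l =
          (((univ.erase i).filter (fun l => x l = 1)).card : ℝ) := by
        rw [← Finset.sum_filter_add_sum_filter_not (univ.erase i) (fun l => x l = 1) x]
        have e1 : ∑ l ∈ (univ.erase i).filter (fun l => x l = 1), x l =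
            (((univ.erase i).filter (fun l => x l = 1)).card : ℝ) := by
          rw [Finset.sum_congr rfl (fun l hl => (Finset.mem_filter.mp hl).2)]
          simp
        have e2 : ∑ l ∈ (univ.erase i).filter (fun l => ¬ x l = 1), x l = 0 := by
          apply Finset.sum_eq_zero
          intro l hl
          rw [Finset.mem_filter, Finset.mem_erase] at hl
          by_cases h0l : x l = 0
          · exact h0l
          · exact absurd (h l hl.1.1 h0l) hl.2
        rw [e1, e2, add_zero]
      have htot := Finset.add_sum_erase univ x (Finset.mem_univ i)
      rw [hsplit, hsum] at htot
      set c := ((univ.erase i).filter (fun l => x l = 1)).card with hc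
      have hxi0 : 0 < x i := lt_of_le_of_ne (h0 i) (Ne.symm hifrac.1)
      have hxi1 : x i < 1 := lt_of_le_of_ne (h1 i) hifrac.2
      rcases le_or_gt b c with hbc | hbc
      · have : (b : ℝ) ≤ (c : ℝ) := by exact_mod_cast hbc
        linarith
      · have : (c : ℝ) + 1 ≤ (b : ℝ) := by exact_mod_cast hbc
        linarith
    obtain ⟨j, hji, hjfrac⟩ := hsecond
    have hij : i ≠ j := Ne.symm hji
    have hxi0 : 0 < x i := lt_of_le_of_ne (h0 i) (Ne.symm hifrac.1)
    have hxi1 : x i < 1 := lt_of_le_of_ne (h1 i) hifrac.2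
    have hxj0 : 0 < x j := lt_of_le_of_ne (h0 j) (Ne.symm hjfrac.1)
    have hxj1 : x j < 1 := lt_of_le_of_ne (h1 j) hjfrac.2
    classical
    set D : Fin n → ℝ := fun l => (if l = i then (1:ℝ) else 0) - (if l = j then 1 else 0)
      with hD
    have hDi : D i = 1 := by simp [hD, hij]
    have hDj : D j = -1 := by simp [hD, hji]
    have hDo : ∀ l, l ≠ i → l ≠ j → D l = 0 := by
      intro l hli hlj; simp [hD, hli, hlj]
    set t1 : ℝ := min (1 - x i) (x j) with ht1def
    set t2 : ℝ := min (x i) (1 - x j) with ht2def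
    have ht1 : 0 < t1 := lt_min (by linarith) hxj0
    have ht2 : 0 < t2 := lt_min hxi0 (by linarith)
    have ht1a : t1 ≤ 1 - x i := min_le_left _ _
    have ht1b : t1 ≤ x j := min_le_right _ _
    have ht2a : t2 ≤ x i := min_le_left _ _
    have ht2b : t2 ≤ 1 - x j := min_le_right _ _
    have hsumD : ∑ l, D l = 0 := by
      simp [hD, Finset.sum_sub_distrib]
    set y : Fin n → ℝ := fun l => x l + t1 * D l with hy
    set z : Fin n → ℝ := fun l => x l - t2 * D l with hz
    have hyi : y i = x i + t1 := by simp [hy, hDi]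
    have hyj : y j = x j - t1 := by simp only [hy, hDj]; ring
    have hyo : ∀ l, l ≠ i → l ≠ j → y l = x l := by
      intro l hli hlj; simp [hy, hDo l hli hlj]
    have hzi : z i = x i - t2 := by simp [hz, hDi]
    have hzj : z j = x j + t2 := by simp only [hz, hDj]; ring
    have hzo : ∀ l, l ≠ i → l ≠ j → z l = x l := by
      intro l hli hlj; simp [hz, hDo l hli hlj]
    have h0y : ∀ l, 0 ≤ y l := by
      intro l
      by_cases hli : l = i
      · rw [hli, hyi]; linarith
      by_cases hlj : l = j
      · rw [hlj, hyj]; linarith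
      · rw [hyo l hli hlj]; exact h0 l
    have h1y : ∀ l, y l ≤ 1 := by
      intro l
      by_cases hli : l = i
      · rw [hli, hyi]; linarith
      by_cases hlj : l = j
      · rw [hlj, hyj]; linarith
      · rw [hyo l hli hlj]; exact h1 l
    have h0z : ∀ l, 0 ≤ z l := by
      intro l
      by_cases hli : l = i
      · rw [hli, hzi]; linarith
      by_cases hlj : l = j
      · rw [hlj, hzj]; linarith
      · rw [hzo l hli hlj]; exact h0 l
    have h1z : ∀ l, z l ≤ 1 := by
      intro l
      by_cases hli : l = i
      · rw [hli, hzi]; linarith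
      by_cases hlj : l = j
      · rw [hlj, hzj]; linarith
      · rw [hzo l hli hlj]; exact h1 l
    have hsumy : ∑ l, y l = (b : ℝ) := by
      simp only [hy]
      rw [Finset.sum_add_distrib, ← Finset.mul_sum, hsumD, hsum]
      ring
    have hsumz : ∑ l, z l = (b : ℝ) := by
      simp only [hz]
      rw [Finset.sum_sub_distrib, ← Finset.mul_sum, hsumD, hsum]
      ring
    have hsub : ∀ (v : Fin n → ℝ), (∀ l, l ≠ i → l ≠ j → v l = x l) →
        ∀ (m : Fin n), (v m = 0 ∨ v m = 1) → m ∈ ({i, j} : Finset (Fin n)) →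
        ((univ : Finset (Fin n)).filter (fun l => v l ≠ 0 ∧ v l ≠ 1)).card ≤ k := by
      intro v hvo m hvm hmij
      have hmx : m ∈ (univ : Finset (Fin n)).filter (fun l => x l ≠ 0 ∧ x l ≠ 1) := by
        rcases Finset.mem_insert.mp hmij with h | h
        · rw [h]; exact hi
        · rw [Finset.mem_singleton.mp h]
          simp [Finset.mem_filter, hjfrac.1, hjfrac.2]
      have hss : (univ : Finset (Fin n)).filter (fun l => v l ≠ 0 ∧ v l ≠ 1) ⊆
          ((univ : Finset (Fin n)).filter (fun l => x l ≠ 0 ∧ x l ≠ 1)).erase m := by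
        intro l hl
        rw [Finset.mem_filter] at hl
        have hlm : l ≠ m := by
          rintro rfl
          rcases hvm with h | h
          · exact hl.2.1 h
          · exact hl.2.2 h
        rw [Finset.mem_erase, Finset.mem_filter]
        refine ⟨hlm, Finset.mem_univ l, ?_⟩
        by_cases hli : l = i
        · rw [hli]; exact hifrac
        by_cases hlj : l = j
        · rw [hlj]; exact hjfrac
        · rw [← hvo l hli hlj]; exact hl.2
      have := Finset.card_le_card hss
      rw [Finset.card_erase_of_mem hmx] at this
      omega
    have hycard : ((univ : Finset (Fin n)).filter (fun l => y l ≠ 0 ∧ y l ≠ 1)).card ≤ k := by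
      rcases min_cases (1 - x i) (x j) with ⟨he, _⟩ | ⟨he, _⟩
      · refine hsub y hyo i (Or.inr ?_) (by simp)
        rw [hyi, ht1def, he]; ring
      · refine hsub y hyo j (Or.inl ?_) (by simp)
        rw [hyj, ht1def, he]; ring
    have hzcard : ((univ : Finset (Fin n)).filter (fun l => z l ≠ 0 ∧ z l ≠ 1)).card ≤ k := by
      rcases min_cases (x i) (1 - x j) with ⟨he, _⟩ | ⟨he, _⟩
      · refine hsub z hzo i (Or.inl ?_) (by simp)
        rw [hzi, ht2def, he]; ring
      · refine hsub z hzo j (Or.inr ?_) (by simp)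
        rw [hzj, ht2def, he]; ring
    obtain ⟨σy, hσy0, hσy1, hσyc, hσym⟩ := ih y hycard h0y h1y hsumy
    obtain ⟨σz, hσz0, hσz1, hσzc, hσzm⟩ := ih z hzcard h0z h1z hsumz
    have hts : 0 < t1 + t2 := by linarith
    set a : ℝ := t2 / (t1 + t2) with ha
    have ha0 : 0 ≤ a := div_nonneg ht2.le hts.le
    have ha1 : a ≤ 1 := by
      rw [ha, div_le_one hts]; linarith
    have hcoef : a * t1 = (1 - a) * t2 := by
      rw [ha]; field_simp; ring
    have hcomb : ∀ l, a * y l + (1 - a) * z l = x l := by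
      intro l
      simp only [hy, hz]
      linear_combination D l * hcoef
    refine ⟨fun S => a * σy S + (1 - a) * σz S, ?_, ?_, ?_, ?_⟩
    · intro S
      exact add_nonneg (mul_nonneg ha0 (hσy0 S)) (mul_nonneg (by linarith) (hσz0 S))
    · rw [Finset.sum_add_distrib, ← Finset.mul_sum, ← Finset.mul_sum, hσy1, hσz1]
      ring
    · intro S hS
      dsimp only at hS
      by_cases hyS : σy S = 0
      · by_cases hzS : σz S = 0
        · exact absurd (by rw [hyS, hzS]; ring) hS
        · exact hσzc S hzS
      · exact hσyc S hyS
    · intro l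
      dsimp only
      have hc : ∀ S ∈ (univ : Finset (Finset (Fin n))),
          (if l ∈ S then a * σy S + (1 - a) * σz S else 0) =
          a * (if l ∈ S then σy S else 0) + (1 - a) * (if l ∈ S then σz S else 0) := by
        intro S _; split <;> simp
      rw [Finset.sum_congr rfl hc, Finset.sum_add_distrib, ← Finset.mul_sum, ← Finset.mul_sum,
        hσym l, hσzm l, hcomb l]

/-- In the disjoint setting, there exists at least one strategy profile
`(σ₁*, σ₂*)` satisfying conditions (4)–(5). Nodes are indexed by `Fin n` (0-based), so the
paper's 1-based index `j` corresponds to `(j : Fin n)` with value `j - 1`; the paper's `p`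
equals `(p : ℕ) + 1` for our 0-based maximal element `p` of `Z(b₁)`. -/
theorem stmt0
    {n : ℕ} {E : Type*} [Fintype E] [DecidableEq E]
    (M : Fin n → Finset E) (w : E → ℝ)
    (hMne : ∀ i, (M i).Nonempty)
    (hcov : ∀ e : E, ∃ i, e ∈ M i)
    (hdisj : ∀ i j : Fin n, i ≠ j → Disjoint (M i) (M j))
    (hw : ∀ e, 0 < w e ∧ w e ≤ 1)
    (estar : Fin n → E)
    (hestar : ∀ i, estar i ∈ M i ∧ ∀ e ∈ M i, w e ≤ w (estar i))
    (horder : ∀ i j : Fin n, i ≤ j → w (estar j) ≤ w (estar i))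
    (b1 : ℕ) (hb1 : b1 ≤ n)
    (p : Fin n)
    (hpZ : (((p : ℕ) : ℝ) + 1 - b1) / (∑ i ∈ Finset.Iic p, 1 / w (estar i)) ≤ w (estar p))
    (hpmax : ∀ j : Fin n,
      (((j : ℕ) : ℝ) + 1 - b1) / (∑ i ∈ Finset.Iic j, 1 / w (estar i)) ≤ w (estar j) → j ≤ p)
    (Sp : ℝ) (hSp : Sp = ∑ i ∈ Finset.Iic p, 1 / w (estar i))
    (Ep : Finset E) (hEp : Ep = (Finset.Iic p).image estar) :
    (∃ σ1 : Finset (Fin n) → ℝ,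
      (∀ S, 0 ≤ σ1 S) ∧ (∑ S : Finset (Fin n), σ1 S = 1) ∧
      (∀ S : Finset (Fin n), σ1 S ≠ 0 → S.card ≤ b1) ∧
      (∀ j : Fin n,
        (∑ S : Finset (Fin n), if j ∈ S then σ1 S else 0) =
          if j ≤ p then 1 - (((p : ℕ) : ℝ) + 1 - b1) / (w (estar j) * Sp) else 0)) ∧
    (∃ σ2 : E → ℝ,
      (∀ e, 0 ≤ σ2 e) ∧ (∑ e : E, σ2 e = 1) ∧
      (∀ e, σ2 e = if e ∈ Ep then 1 / (w e * Sp) else 0)) := by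
  classical
  have hwpos : ∀ e, 0 < w e := fun e => (hw e).1
  have hSppos : 0 < Sp := by
    rw [hSp]
    apply Finset.sum_pos
    · intro i _
      exact one_div_pos.mpr (hwpos _)
    · exact ⟨p, Finset.mem_Iic.mpr le_rfl⟩
  have hSpne : Sp ≠ 0 := ne_of_gt hSppos
  rw [← hSp] at hpZ
  -- b1 ≤ p + 1
  have hq : (b1 : ℝ) ≤ ((p : ℕ) : ℝ) + 1 := by
    rcases Nat.eq_zero_or_pos b1 with hb0 | hb0
    · rw [hb0]; push_cast; positivity
    · have hlt : b1 - 1 < n := by omega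
      set j0 : Fin n := ⟨b1 - 1, hlt⟩ with hj0
      have hnum : (((j0 : ℕ) : ℝ) + 1 - b1) = 0 := by
        simp only [hj0]
        push_cast [Nat.cast_sub hb0]
        ring
      have hj0p : j0 ≤ p := hpmax j0 (by rw [hnum, zero_div]; exact (hwpos _).le)
      have hle : b1 - 1 ≤ (p : ℕ) := hj0p
      have : b1 ≤ (p : ℕ) + 1 := by omega
      exact_mod_cast this
  have hfrac : ∀ j : Fin n, j ≤ p →
      (((p : ℕ) : ℝ) + 1 - b1) ≤ w (estar j) * Sp := by
    intro j hj
    have h1 : (((p : ℕ) : ℝ) + 1 - b1) ≤ w (estar p) * Sp := (div_le_iff₀ hSppos).mp hpZ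
    have h2 : w (estar p) ≤ w (estar j) := horder j p hj
    nlinarith [hSppos]
  set x : Fin n → ℝ := fun j =>
    if j ≤ p then 1 - (((p : ℕ) : ℝ) + 1 - b1) / (w (estar j) * Sp) else 0 with hx
  have h0x : ∀ j, 0 ≤ x j := by
    intro j
    simp only [hx]
    split
    · rename_i hj
      have hle := hfrac j hj
      have hpos : 0 < w (estar j) * Sp := mul_pos (hwpos _) hSppos
      have : (((p : ℕ) : ℝ) + 1 - b1) / (w (estar j) * Sp) ≤ 1 :=
        (div_le_one hpos).mpr hle
      linarith
    · exact le_rfl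
  have h1x : ∀ j, x j ≤ 1 := by
    intro j
    simp only [hx]
    split
    · have hpos : 0 < w (estar j) * Sp := mul_pos (hwpos _) hSppos
      have : 0 ≤ (((p : ℕ) : ℝ) + 1 - b1) / (w (estar j) * Sp) :=
        div_nonneg (by linarith) hpos.le
      linarith
    · norm_num
  have hIic : (Finset.Iic p : Finset (Fin n)) = univ.filter (· ≤ p) := by
    ext; simp
  have hterm : ∀ j ∈ Finset.Iic p,
      (((p : ℕ) : ℝ) + 1 - b1) / (w (estar j) * Sp) =
      ((((p : ℕ) : ℝ) + 1 - b1) / Sp) * (1 / w (estar j)) := by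
    intro j _
    rw [div_mul_div_comm, mul_one, mul_comm (w (estar j)) Sp]
  have hsumx : ∑ j, x j = (b1 : ℝ) := by
    have hstep : ∑ j, x j =
        ∑ j ∈ Finset.Iic p, (1 - (((p : ℕ) : ℝ) + 1 - b1) / (w (estar j) * Sp)) := by
      rw [hIic, Finset.sum_filter, hx]
    rw [hstep, Finset.sum_sub_distrib, Finset.sum_const, Fin.card_Iic,
      Finset.sum_congr rfl hterm, ← Finset.mul_sum, ← hSp, div_mul_cancel₀ _ hSpne]
    push_cast
    ring
  have hcardle : ((univ : Finset (Fin n)).filter (fun i => x i ≠ 0 ∧ x i ≠ 1)).card ≤ n :=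
    (Finset.card_filter_le _ _).trans (by simp)
  obtain ⟨σ1, hs0, hs1, hsc, hsm⟩ := rep_aux n x hcardle h0x h1x hsumx
  constructor
  · exact ⟨σ1, hs0, hs1, hsc, fun j => by rw [hsm j, hx]⟩
  · have hinj : ∀ a ∈ Finset.Iic p, ∀ b ∈ Finset.Iic p, estar a = estar b → a = b := by
      intro a _ b _ hab
      by_contra hne
      exact (Finset.disjoint_left.mp (hdisj a b hne) (hestar a).1)
        (by rw [hab]; exact (hestar b).1)
    refine ⟨fun e => if e ∈ Ep then 1 / (w e * Sp) else 0, ?_, ?_, fun e => rfl⟩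
    · intro e
      dsimp only
      split
      · have := hwpos e
        positivity
      · exact le_rfl
    · have hsi : ∑ e : E, (if e ∈ Ep then 1 / (w e * Sp) else 0) =
          ∑ e ∈ Ep, 1 / (w e * Sp) := by
        rw [Finset.sum_ite_mem, Finset.univ_inter]
      rw [hsi, hEp, Finset.sum_image hinj]
      have hterm2 : ∀ i ∈ Finset.Iic p,
          1 / (w (estar i) * Sp) = (1 / w (estar i)) * (1 / Sp) := by
        intro i _
        rw [div_mul_div_comm, one_mul]
      rw [Finset.sum_congr rfl hterm2, ← Finset.sum_mul, ← hSp, mul_one_div, div_self hSpne]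
end

section
/- In the disjoint setting, the intended marginal vector is a valid marginal vector for a mixed strategy with budget b_1: defining ρ(v_j) = 1 − (p−b_1)/(w_{e*_j} S_p) for j ≤ p and ρ(v_j) = 0 for j > p, one has 0 ≤ ρ(v_j) ≤ 1 for every j ∈ {1,…,n} and Σ_{j=1}^{n} ρ(v_j) = b_1. -/
open Finset

/-!
The condition defining `Z(b₁)` holds trivially at `j = b₁` (its numerator vanishes), so
maximality of `p` gives `b₁ ≤ p`. Since the critical weights decrease, the membership
`p ∈ Z(b₁)` bounds `(p - b₁) / (w_{e*_j} S_p)` by `1` for every `j ≤ p`, which puts each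
`ρ(v_j)` in `[0, 1]`; and `S_p` is exactly the normaliser that makes the `p` terms
`(p - b₁) / (w_{e*_j} S_p)` add up to `p - b₁`.
-/

theorem Finset.sum_one_sub_div_mul_sum_one_div {ι : Type*} (s : Finset ι) (c : ι → ℝ)
    (hs : ∑ i ∈ s, 1 / c i ≠ 0) (t : ℝ) :
    ∑ j ∈ s, (1 - t / (c j * ∑ i ∈ s, 1 / c i)) = #s - t := by
  have hsplit : ∀ j, t / (c j * ∑ i ∈ s, 1 / c i) = t / (∑ i ∈ s, 1 / c i) * (1 / c j) :=
    fun j => by ring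
  simp only [hsplit, sum_sub_distrib, sum_const, nsmul_eq_mul, mul_one, ← mul_sum]
  rw [div_mul_cancel₀ t hs]

theorem le_succ_of_forall_div_sum_le_imp_le {n : ℕ} (c : Fin n → ℝ) (hc : ∀ i, 0 ≤ c i)
    (b : ℕ) (hb : b ≤ n) (p : Fin n)
    (hmax : ∀ j : Fin n, (((j : ℕ) : ℝ) + 1 - b) / (∑ i ∈ Iic j, 1 / c i) ≤ c j → j ≤ p) :
    b ≤ (p : ℕ) + 1 := by
  by_contra! hlt
  let j : Fin n := ⟨b - 1, by omega⟩
  have hnum : ((j : ℕ) : ℝ) + 1 - b = 0 := by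
    simp only [j, Nat.cast_pred (by omega : 0 < b)]
    ring
  have hjp : (j : ℕ) ≤ p := hmax j (by simpa [hnum] using hc j)
  simp only [j] at hjp
  omega

theorem stmt1_general
    {n : ℕ} {E : Type*}
    (w : E → ℝ)
    (hw : ∀ e, 0 < w e ∧ w e ≤ 1)
    (estar : Fin n → E)
    (horder : ∀ i j : Fin n, i ≤ j → w (estar j) ≤ w (estar i))
    (b1 : ℕ) (hb1 : b1 ≤ n)
    (p : Fin n)
    (hpZ : (((p : ℕ) : ℝ) + 1 - b1) / (∑ i ∈ Finset.Iic p, 1 / w (estar i)) ≤ w (estar p))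
    (hpmax : ∀ j : Fin n,
      (((j : ℕ) : ℝ) + 1 - b1) / (∑ i ∈ Finset.Iic j, 1 / w (estar i)) ≤ w (estar j) → j ≤ p)
    (Sp : ℝ) (hSp : Sp = ∑ i ∈ Finset.Iic p, 1 / w (estar i))
    (ρ : Fin n → ℝ)
    (hρ : ∀ j : Fin n,
      ρ j = if j ≤ p then 1 - (((p : ℕ) : ℝ) + 1 - b1) / (w (estar j) * Sp) else 0) :
    (∀ j : Fin n, 0 ≤ ρ j ∧ ρ j ≤ 1) ∧ (∑ j : Fin n, ρ j = b1) := by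
  have hwpos : ∀ i, 0 < w (estar i) := fun i => (hw _).1
  have hSpos : 0 < Sp := hSp ▸ sum_pos (fun i _ => one_div_pos.2 (hwpos i)) ⟨p, mem_Iic.2 le_rfl⟩
  have hb1p : (b1 : ℝ) ≤ (p : ℕ) + 1 := by
    exact_mod_cast le_succ_of_forall_div_sum_le_imp_le _ (fun i => (hwpos i).le) b1 hb1 p hpmax
  have hnum_le : ∀ j ≤ p, ((p : ℕ) : ℝ) + 1 - b1 ≤ w (estar j) * Sp := fun j hj =>
    calc ((p : ℕ) : ℝ) + 1 - b1 ≤ w (estar p) * Sp := (div_le_iff₀ hSpos).1 (hSp ▸ hpZ)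
      _ ≤ w (estar j) * Sp := by gcongr; exact horder j p hj
  refine ⟨fun j => ?_, ?_⟩
  · rw [hρ j]
    split_ifs with hj
    · have hden : 0 < w (estar j) * Sp := mul_pos (hwpos j) hSpos
      have h0 : 0 ≤ (((p : ℕ) : ℝ) + 1 - b1) / (w (estar j) * Sp) :=
        div_nonneg (by linarith) hden.le
      have h1 : (((p : ℕ) : ℝ) + 1 - b1) / (w (estar j) * Sp) ≤ 1 :=
        (div_le_one hden).2 (hnum_le j hj)
      constructor <;> linarith
    · simp
  · rw [Fintype.sum_congr _ _ hρ, ← sum_filter, filter_ge_eq_Iic, hSp,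
      sum_one_sub_div_mul_sum_one_div _ _ (hSp ▸ hSpos.ne'), Fin.card_Iic]
    push_cast
    ring

/-- In the disjoint setting, the intended marginal vector is a valid
marginal vector for a mixed strategy with budget `b₁`: each entry lies in `[0,1]` and
the entries sum to `b₁`.  Nodes are indexed 0-based by `Fin n`, so the paper's `p`
equals our `(p : ℕ) + 1`. -/
theorem stmt1
    {n : ℕ} {E : Type*} [Fintype E] [DecidableEq E]
    (M : Fin n → Finset E) (w : E → ℝ)
    (hMne : ∀ i, (M i).Nonempty)
    (hcov : ∀ e : E, ∃ i, e ∈ M i)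
    (hdisj : ∀ i j : Fin n, i ≠ j → Disjoint (M i) (M j))
    (hw : ∀ e, 0 < w e ∧ w e ≤ 1)
    (estar : Fin n → E)
    (hestar : ∀ i, estar i ∈ M i ∧ ∀ e ∈ M i, w e ≤ w (estar i))
    (horder : ∀ i j : Fin n, i ≤ j → w (estar j) ≤ w (estar i))
    (b1 : ℕ) (hb1 : b1 ≤ n)
    (p : Fin n)
    (hpZ : (((p : ℕ) : ℝ) + 1 - b1) / (∑ i ∈ Finset.Iic p, 1 / w (estar i)) ≤ w (estar p))
    (hpmax : ∀ j : Fin n,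
      (((j : ℕ) : ℝ) + 1 - b1) / (∑ i ∈ Finset.Iic j, 1 / w (estar i)) ≤ w (estar j) → j ≤ p)
    (Sp : ℝ) (hSp : Sp = ∑ i ∈ Finset.Iic p, 1 / w (estar i))
    (ρ : Fin n → ℝ)
    (hρ : ∀ j : Fin n,
      ρ j = if j ≤ p then 1 - (((p : ℕ) : ℝ) + 1 - b1) / (w (estar j) * Sp) else 0) :
    (∀ j : Fin n, 0 ≤ ρ j ∧ ρ j ≤ 1) ∧ (∑ j : Fin n, ρ j = b1) :=
  stmt1_general w hw estar horder b1 hb1 p hpZ hpmax Sp hSp ρ hρ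
end

section
/- In the disjoint setting, let σ_1* be any mixed strategy of Player 1 whose marginals satisfy ρ_{σ_1*}(v_j) = 1 − (p−b_1)/(w_{e*_j} S_p) for j ≤ p and ρ_{σ_1*}(v_j) = 0 for j > p. Then for every component e ∈ ℰ, the expected loss satisfies L(σ_1*, e) ≤ (p − b_1)/S_p. -/
open Finset Function

/-
Since the monitoring sets are disjoint, a component `e ∈ E_{v_i}` is missed exactly when `v_i` is
not chosen, so `L(σ, e) = w_e (1 - ρ(v_i))`. For `i ≤ p` the prescribed marginal makes this
`(w_e / w_{e*_i}) (p - b₁)/S_p ≤ (p - b₁)/S_p`. For `i > p` the loss is `w_e ≤ w_{e*_{p+1}}`, and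
`p + 1 ∉ Z(b₁)` unfolds to `w_{e*_{p+1}} S_p < p - b₁`.
-/

lemma Finset.sum_Iic_of_covBy {α M : Type*} [LinearOrder α] [LocallyFiniteOrderBot α]
    [AddCommMonoid M] {a b : α} (hab : a ⋖ b) (f : α → M) :
    ∑ x ∈ Iic b, f x = f b + ∑ x ∈ Iic a, f x := by
  have hIio : Iio b = Iic a := coe_injective (by simpa using hab.Iio_eq)
  rw [Iic_eq_cons_Iio, sum_cons, hIio]

lemma mem_biUnion_iff_of_pairwise_disjoint {ι E : Type*} [DecidableEq E] {M : ι → Finset E}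
    (hM : Pairwise (Disjoint on M)) {e : E} {i : ι} (hei : e ∈ M i) (S : Finset ι) :
    e ∈ S.biUnion M ↔ i ∈ S := by
  refine ⟨fun he => ?_, fun hi => mem_biUnion.2 ⟨i, hi, hei⟩⟩
  obtain ⟨j, hjS, hej⟩ := mem_biUnion.1 he
  obtain rfl : j = i := by_contra fun hji => disjoint_left.1 (hM hji) hej hei
  exact hjS

section MixedStrategy

variable {ι : Type*} [Fintype ι] [DecidableEq ι] (σ : Finset ι → ℝ)

lemma sum_ite_mem_le_one (hσ : ∀ S, 0 ≤ σ S) (hσsum : ∑ S, σ S = 1) (j : ι) :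
    (∑ S, if j ∈ S then σ S else 0) ≤ 1 :=
  hσsum ▸ sum_le_sum fun S _ => by split_ifs <;> simp [hσ S]

variable {E : Type*} [DecidableEq E] {M : ι → Finset E}

lemma sum_mul_ite_mem_biUnion (hM : Pairwise (Disjoint on M)) (hσsum : ∑ S, σ S = 1)
    {e : E} {i : ι} (hei : e ∈ M i) (x : ℝ) :
    (∑ S, σ S * (if e ∈ S.biUnion M then 0 else x)) =
      x * (1 - ∑ S, if i ∈ S then σ S else 0) := by
  simp_rw [mem_biUnion_iff_of_pairwise_disjoint hM hei]
  rw [← hσsum, ← sum_sub_distrib, mul_sum]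
  refine sum_congr rfl fun S _ => ?_
  split_ifs <;> ring

end MixedStrategy

lemma mul_div_mul_le_div {x y c S : ℝ} (hxy : x ≤ y) (hy : 0 < y) (hc : 0 ≤ c) (hS : 0 < S) :
    x * (c / (y * S)) ≤ c / S :=
  calc x * (c / (y * S)) ≤ y * (c / (y * S)) := by gcongr
    _ = c / S := by field_simp

lemma lt_div_of_lt_add_one_div_one_div_add {a c S : ℝ} (ha : 0 < a) (hS : 0 < S)
    (h : a < (c + 1) / (1 / a + S)) : a < c / S := by
  rw [lt_div_iff₀ (by positivity), mul_add, mul_one_div_cancel ha.ne'] at h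
  rw [lt_div_iff₀ hS]
  linarith

theorem stmt3_general
    {n : ℕ} {E : Type*} [DecidableEq E]
    (M : Fin n → Finset E) (w : E → ℝ)
    (hcov : ∀ e : E, ∃ i, e ∈ M i)
    (hdisj : ∀ i j : Fin n, i ≠ j → Disjoint (M i) (M j))
    (hw : ∀ e, 0 < w e ∧ w e ≤ 1)
    (estar : Fin n → E)
    (hestar : ∀ i, estar i ∈ M i ∧ ∀ e ∈ M i, w e ≤ w (estar i))
    (horder : ∀ i j : Fin n, i ≤ j → w (estar j) ≤ w (estar i))
    (b1 : ℕ)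
    (p : Fin n)
    (hpmax : ∀ j : Fin n,
      (((j : ℕ) : ℝ) + 1 - b1) / (∑ i ∈ Finset.Iic j, 1 / w (estar i)) ≤ w (estar j) → j ≤ p)
    (Sp : ℝ) (hSp : Sp = ∑ i ∈ Finset.Iic p, 1 / w (estar i))
    (σ1 : Finset (Fin n) → ℝ)
    (hσ1nn : ∀ S, 0 ≤ σ1 S) (hσ1sum : ∑ S : Finset (Fin n), σ1 S = 1)
    (hmarg : ∀ j : Fin n,
      (∑ S : Finset (Fin n), if j ∈ S then σ1 S else 0) =
        if j ≤ p then 1 - (((p : ℕ) : ℝ) + 1 - b1) / (w (estar j) * Sp) else 0) :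
    ∀ e : E,
      (∑ S : Finset (Fin n), σ1 S * (if e ∈ S.biUnion M then 0 else w e)) ≤
        (((p : ℕ) : ℝ) + 1 - b1) / Sp := by
  intro e
  obtain ⟨i, hei⟩ := hcov e
  have hwpos x : 0 < w x := (hw x).1
  have hSp_pos : 0 < Sp := hSp ▸ sum_pos (fun k _ => one_div_pos.2 (hwpos _)) nonempty_Iic
  rw [sum_mul_ite_mem_biUnion σ1 hdisj hσ1sum hei, hmarg i]
  split_ifs with hip
  · have hnum : 0 ≤ ((p : ℕ) : ℝ) + 1 - b1 := by
      have hρp := sum_ite_mem_le_one σ1 hσ1nn hσ1sum p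
      rwa [hmarg p, if_pos le_rfl, sub_le_self_iff,
        le_div_iff₀ (mul_pos (hwpos _) hSp_pos), zero_mul] at hρp
    calc w e * (1 - (1 - (((p : ℕ) : ℝ) + 1 - b1) / (w (estar i) * Sp)))
        = w e * ((((p : ℕ) : ℝ) + 1 - b1) / (w (estar i) * Sp)) := by ring
      _ ≤ (((p : ℕ) : ℝ) + 1 - b1) / Sp :=
        mul_div_mul_le_div ((hestar i).2 e hei) (hwpos _) hnum hSp_pos
  · obtain ⟨q, hpq, hqi⟩ := exists_covBy_le_of_lt (not_le.1 hip)
    have hq : ((q : ℕ) : ℝ) = (p : ℕ) + 1 := by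
      exact_mod_cast (Nat.covBy_iff_add_one_eq.1 (Fin.covBy_iff.1 hpq)).symm
    have hq_notin_Z : w (estar q) < (((p : ℕ) : ℝ) + 1 - b1 + 1) / (1 / w (estar q) + Sp) := by
      have := mt (hpmax q) (not_le.2 hpq.lt)
      rwa [not_le, sum_Iic_of_covBy hpq, ← hSp, hq, add_right_comm, add_sub_right_comm] at this
    calc w e * (1 - 0) ≤ w (estar i) := by simpa using (hestar i).2 e hei
      _ ≤ w (estar q) := horder q i hqi
      _ ≤ (((p : ℕ) : ℝ) + 1 - b1) / Sp :=
        (lt_div_of_lt_add_one_div_one_div_add (hwpos _) hSp_pos hq_notin_Z).le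

/-- In the disjoint setting, if `σ₁*` is any mixed strategy of Player 1
whose marginals satisfy condition (4), then for every component `e`,
`L(σ₁*, e) ≤ (p − b₁)/S_p`.  Nodes are indexed 0-based by `Fin n`, so the paper's `p`
equals our `(p : ℕ) + 1`. -/
theorem stmt3
    {n : ℕ} {E : Type*} [Fintype E] [DecidableEq E]
    (M : Fin n → Finset E) (w : E → ℝ)
    (hMne : ∀ i, (M i).Nonempty)
    (hcov : ∀ e : E, ∃ i, e ∈ M i)
    (hdisj : ∀ i j : Fin n, i ≠ j → Disjoint (M i) (M j))
    (hw : ∀ e, 0 < w e ∧ w e ≤ 1)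
    (estar : Fin n → E)
    (hestar : ∀ i, estar i ∈ M i ∧ ∀ e ∈ M i, w e ≤ w (estar i))
    (horder : ∀ i j : Fin n, i ≤ j → w (estar j) ≤ w (estar i))
    (b1 : ℕ) (hb1 : b1 ≤ n)
    (p : Fin n)
    (hpZ : (((p : ℕ) : ℝ) + 1 - b1) / (∑ i ∈ Finset.Iic p, 1 / w (estar i)) ≤ w (estar p))
    (hpmax : ∀ j : Fin n,
      (((j : ℕ) : ℝ) + 1 - b1) / (∑ i ∈ Finset.Iic j, 1 / w (estar i)) ≤ w (estar j) → j ≤ p)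
    (Sp : ℝ) (hSp : Sp = ∑ i ∈ Finset.Iic p, 1 / w (estar i))
    (σ1 : Finset (Fin n) → ℝ)
    (hσ1nn : ∀ S, 0 ≤ σ1 S) (hσ1sum : ∑ S : Finset (Fin n), σ1 S = 1)
    (hσ1card : ∀ S : Finset (Fin n), σ1 S ≠ 0 → S.card ≤ b1)
    (hmarg : ∀ j : Fin n,
      (∑ S : Finset (Fin n), if j ∈ S then σ1 S else 0) =
        if j ≤ p then 1 - (((p : ℕ) : ℝ) + 1 - b1) / (w (estar j) * Sp) else 0) :
    ∀ e : E,
      (∑ S : Finset (Fin n), σ1 S * (if e ∈ S.biUnion M then 0 else w e)) ≤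
        (((p : ℕ) : ℝ) + 1 - b1) / Sp :=
  stmt3_general M w hcov hdisj hw estar hestar horder b1 p hpmax Sp hSp σ1 hσ1nn hσ1sum hmarg
end

section
/- In the disjoint setting, if p < n (where p = max Z(b_1)), then w_{e*_{p+1}} S_p < p − b_1; consequently, the criticality of the most critical component in any unmonitored set E_{v_{p+1}},…,E_{v_n} is strictly less than (p − b_1)/S_p. -/
open Finset

/-- In the disjoint setting, if `p < n` (1-based; here `(p : ℕ) + 1 < n`
for the 0-based maximal element `p` of `Z(b₁)`), then `w_{e*_{p+1}} S_p < p − b₁`;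
consequently, the criticality of the most critical component of any unmonitored set
`E_{v_{p+1}}, …, E_{v_n}` is strictly less than `(p − b₁)/S_p`. -/
theorem stmt4
    {n : ℕ} {E : Type*} [Fintype E] [DecidableEq E]
    (M : Fin n → Finset E) (w : E → ℝ)
    (hMne : ∀ i, (M i).Nonempty)
    (hdisj : ∀ i j : Fin n, i ≠ j → Disjoint (M i) (M j))
    (hw : ∀ e, 0 < w e ∧ w e ≤ 1)
    (estar : Fin n → E)
    (hestar : ∀ i, estar i ∈ M i ∧ ∀ e ∈ M i, w e ≤ w (estar i))
    (horder : ∀ i j : Fin n, i ≤ j → w (estar j) ≤ w (estar i))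
    (b1 : ℕ) (hb1 : b1 ≤ n)
    (p : Fin n)
    (hpZ : (((p : ℕ) : ℝ) + 1 - b1) / (∑ i ∈ Finset.Iic p, 1 / w (estar i)) ≤ w (estar p))
    (hpmax : ∀ j : Fin n,
      (((j : ℕ) : ℝ) + 1 - b1) / (∑ i ∈ Finset.Iic j, 1 / w (estar i)) ≤ w (estar j) → j ≤ p)
    (Sp : ℝ) (hSp : Sp = ∑ i ∈ Finset.Iic p, 1 / w (estar i))
    (hplt : (p : ℕ) + 1 < n) :
    (∀ j : Fin n, (j : ℕ) = (p : ℕ) + 1 →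
      w (estar j) * Sp < ((p : ℕ) : ℝ) + 1 - b1) ∧
    (∀ j : Fin n, p < j →
      w (estar j) < (((p : ℕ) : ℝ) + 1 - b1) / Sp) := by

  set q : Fin n := ⟨(p : ℕ) + 1, hplt⟩ with hqdef
  have hpq : p < q := by simp [Fin.lt_def, hqdef]
  have hqnot : q ∉ Finset.Iic p := by
    simp only [Finset.mem_Iic]
    exact not_le.mpr hpq
  have hIic : Finset.Iic q = insert q (Finset.Iic p) := by
    ext i
    simp only [Finset.mem_Iic, Finset.mem_insert, Fin.le_def, Fin.ext_iff, hqdef]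
    omega
  have hSq : ∑ i ∈ Finset.Iic q, 1 / w (estar i)
      = 1 / w (estar q) + ∑ i ∈ Finset.Iic p, 1 / w (estar i) := by
    rw [hIic, Finset.sum_insert hqnot]
  have hSppos : 0 < Sp := by
    rw [hSp]
    apply Finset.sum_pos
    · intro i _
      exact one_div_pos.mpr (hw (estar i)).1
    · exact ⟨p, Finset.mem_Iic.mpr le_rfl⟩
  have hwq : 0 < w (estar q) := (hw (estar q)).1
  have hSqpos : 0 < ∑ i ∈ Finset.Iic q, 1 / w (estar i) := by
    rw [hSq, ← hSp]
    positivity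
  have hnot : w (estar q) < (((q : ℕ) : ℝ) + 1 - b1) / (∑ i ∈ Finset.Iic q, 1 / w (estar i)) := by
    by_contra h
    push_neg at h
    exact absurd (hpmax q h) (not_le.mpr hpq)
  have hqval : ((q : ℕ) : ℝ) = ((p : ℕ) : ℝ) + 1 := by
    simp [hqdef]
  have key : w (estar q) * Sp < ((p : ℕ) : ℝ) + 1 - b1 := by
    have h1 : w (estar q) * (∑ i ∈ Finset.Iic q, 1 / w (estar i)) < ((q : ℕ) : ℝ) + 1 - b1 :=
      (lt_div_iff₀ hSqpos).mp hnot
    rw [hSq, ← hSp, hqval] at h1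
    have h2 : w (estar q) * (1 / w (estar q)) = 1 := by
      field_simp
    nlinarith [h1, h2]
  constructor
  · intro j hj
    have : j = q := by
      apply Fin.ext
      simp [hj, hqdef]
    rw [this]
    exact key
  · intro j hj
    have hqj : q ≤ j := by
      simp only [Fin.le_def, hqdef]
      exact hj
    have hle : w (estar j) ≤ w (estar q) := horder q j hqj
    rw [lt_div_iff₀ hSppos]
    calc w (estar j) * Sp ≤ w (estar q) * Sp := by nlinarith
    _ < ((p : ℕ) : ℝ) + 1 - b1 := key
end

section
/- In the disjoint setting, let σ_2* be the mixed attack strategy with σ_2*(e) = 1/(w_e S_p) for e ∈ E_p and σ_2*(e) = 0 otherwise. Then for every pure action V ⊆ 𝒱 of Player 1 with |V| ≤ b_1, the expected loss satisfies L(V, σ_2*) ≥ (p − b_1)/S_p. -/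
open Finset

/-- In the disjoint setting, if `σ₂*` is the mixed attack strategy (5),
then for every pure action `V` of Player 1 with `|V| ≤ b₁`, the expected loss satisfies
`L(V, σ₂*) ≥ (p − b₁)/S_p`.  Nodes are indexed 0-based by `Fin n`, so the paper's `p`
equals our `(p : ℕ) + 1`. -/
theorem stmt5
    {n : ℕ} {E : Type*} [Fintype E] [DecidableEq E]
    (M : Fin n → Finset E) (w : E → ℝ)
    (hMne : ∀ i, (M i).Nonempty)
    (hcov : ∀ e : E, ∃ i, e ∈ M i)
    (hdisj : ∀ i j : Fin n, i ≠ j → Disjoint (M i) (M j))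
    (hw : ∀ e, 0 < w e ∧ w e ≤ 1)
    (estar : Fin n → E)
    (hestar : ∀ i, estar i ∈ M i ∧ ∀ e ∈ M i, w e ≤ w (estar i))
    (horder : ∀ i j : Fin n, i ≤ j → w (estar j) ≤ w (estar i))
    (b1 : ℕ) (hb1 : b1 ≤ n)
    (p : Fin n)
    (hpZ : (((p : ℕ) : ℝ) + 1 - b1) / (∑ i ∈ Finset.Iic p, 1 / w (estar i)) ≤ w (estar p))
    (hpmax : ∀ j : Fin n,
      (((j : ℕ) : ℝ) + 1 - b1) / (∑ i ∈ Finset.Iic j, 1 / w (estar i)) ≤ w (estar j) → j ≤ p)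
    (Sp : ℝ) (hSp : Sp = ∑ i ∈ Finset.Iic p, 1 / w (estar i))
    (Ep : Finset E) (hEp : Ep = (Finset.Iic p).image estar)
    (σ2 : E → ℝ)
    (hσ2 : ∀ e : E, σ2 e = if e ∈ Ep then 1 / (w e * Sp) else 0) :
    ∀ S : Finset (Fin n), S.card ≤ b1 →
      (((p : ℕ) : ℝ) + 1 - b1) / Sp ≤
        ∑ e : E, σ2 e * (if e ∈ S.biUnion M then 0 else w e) := by
  intro S hS
  have hwpos : ∀ e, 0 < w e := fun e => (hw e).1
  have hSpos : 0 < Sp := by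
    rw [hSp]
    apply Finset.sum_pos
    · intro i _
      have := hwpos (estar i); positivity
    · exact ⟨p, Finset.mem_Iic.mpr le_rfl⟩
  have hinj : Function.Injective estar := by
    intro i j hij
    by_contra h
    exact (Finset.disjoint_left.mp (hdisj i j h) (hestar i).1) (hij ▸ (hestar j).1)
  have hmem : ∀ i : Fin n, estar i ∈ S.biUnion M ↔ i ∈ S := by
    intro i
    simp only [Finset.mem_biUnion]
    constructor
    · rintro ⟨s, hs, hm⟩
      by_cases h : s = i
      · exact h ▸ hs
      · exact absurd (hestar i).1 fun hi => (Finset.disjoint_left.mp (hdisj s i h) hm) hi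
    · intro h; exact ⟨i, h, (hestar i).1⟩
  have hsum : ∑ e : E, σ2 e * (if e ∈ S.biUnion M then 0 else w e)
      = ∑ i ∈ Finset.Iic p, (if i ∈ S then 0 else 1 / Sp) := by
    rw [← Finset.sum_subset (Finset.subset_univ Ep)
      (by intro e _ he; rw [hσ2 e, if_neg he, zero_mul])]
    rw [hEp, Finset.sum_image (fun i _ j _ h => hinj h)]
    apply Finset.sum_congr rfl
    intro i hi
    by_cases h : i ∈ S
    · rw [if_pos ((hmem i).mpr h), if_pos h, mul_zero]
    · rw [if_neg (fun hc => h ((hmem i).mp hc)), if_neg h, hσ2,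
        if_pos (by rw [hEp]; exact Finset.mem_image_of_mem _ hi)]
      have h1 := (hwpos (estar i)).ne'
      have h2 := hSpos.ne'
      field_simp
  rw [hsum]
  rw [Finset.sum_ite, Finset.sum_const, Finset.sum_const, smul_zero, zero_add,
    nsmul_eq_mul, mul_one_div]
  apply div_le_div_of_nonneg_right ?_ hSpos.le
  have hcards : ((Finset.Iic p).filter (fun i => i ∈ S)).card
      + ((Finset.Iic p).filter (fun i => ¬ i ∈ S)).card = (Finset.Iic p).card :=
    Finset.card_filter_add_card_filter_not _
  have hIic : (Finset.Iic p).card = (p : ℕ) + 1 := by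
    simp [Fin.card_Iic]
  have hle : ((Finset.Iic p).filter (fun i => i ∈ S)).card ≤ b1 := by
    calc ((Finset.Iic p).filter (fun i => i ∈ S)).card ≤ S.card :=
          Finset.card_le_card (fun x hx => (Finset.mem_filter.mp hx).2)
      _ ≤ b1 := hS
  have : (p : ℕ) + 1 ≤ b1 + ((Finset.Iic p).filter (fun i => ¬ i ∈ S)).card := by
    omega
  have := (Nat.cast_le (α := ℝ)).mpr this
  push_cast at this ⊢
  linarith
end

section
/- Theorem 1: If the monitoring sets are pairwise disjoint (E_{v_i} ∩ E_{v_j} = ∅ for any two nodes v_i ≠ v_j), then any strategy profile (σ_1*, σ_2*) satisfying conditions (4)–(5) is a Nash equilibrium of the game, and the value of the game is L(σ_1*, σ_2*) = (p − b_1)/S_p. -/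
open Finset

namespace Stmt6

/-- Expected loss `L(σ₁, σ₂)` of the monitoring game with nodes `Fin n`,
components `E`, monitoring sets `M`, and criticality levels `w`. -/
noncomputable def eLoss {n : ℕ} {E : Type*} [Fintype E] [DecidableEq E]
    (M : Fin n → Finset E) (w : E → ℝ) (σ1 : Finset (Fin n) → ℝ) (σ2 : E → ℝ) : ℝ :=
  ∑ S : Finset (Fin n), ∑ e : E, σ1 S * σ2 e * (if e ∈ S.biUnion M then 0 else w e)

/-- Theorem 1: If the monitoring sets are pairwise disjoint, then any
strategy profile `(σ₁*, σ₂*)` satisfying conditions (4)–(5) is a Nash equilibrium of the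
game, and the value of the game is `L(σ₁*, σ₂*) = (p − b₁)/S_p`.  Nodes are indexed
0-based by `Fin n`, so the paper's `p` equals our `(p : ℕ) + 1`. -/
theorem stmt6
    {n : ℕ} {E : Type*} [Fintype E] [DecidableEq E]
    (M : Fin n → Finset E) (w : E → ℝ)
    (hMne : ∀ i, (M i).Nonempty)
    (hcov : ∀ e : E, ∃ i, e ∈ M i)
    (hdisj : ∀ i j : Fin n, i ≠ j → Disjoint (M i) (M j))
    (hw : ∀ e, 0 < w e ∧ w e ≤ 1)
    (estar : Fin n → E)
    (hestar : ∀ i, estar i ∈ M i ∧ ∀ e ∈ M i, w e ≤ w (estar i))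
    (horder : ∀ i j : Fin n, i ≤ j → w (estar j) ≤ w (estar i))
    (b1 : ℕ) (hb1 : b1 ≤ n)
    (p : Fin n)
    (hpZ : (((p : ℕ) : ℝ) + 1 - b1) / (∑ i ∈ Finset.Iic p, 1 / w (estar i)) ≤ w (estar p))
    (hpmax : ∀ j : Fin n,
      (((j : ℕ) : ℝ) + 1 - b1) / (∑ i ∈ Finset.Iic j, 1 / w (estar i)) ≤ w (estar j) → j ≤ p)
    (Sp : ℝ) (hSp : Sp = ∑ i ∈ Finset.Iic p, 1 / w (estar i))
    (Ep : Finset E) (hEp : Ep = (Finset.Iic p).image estar)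
    -- σ₁* is a mixed monitoring strategy with budget b₁ satisfying condition (4):
    (σ1 : Finset (Fin n) → ℝ)
    (hσ1nn : ∀ S, 0 ≤ σ1 S) (hσ1sum : ∑ S : Finset (Fin n), σ1 S = 1)
    (hσ1card : ∀ S : Finset (Fin n), σ1 S ≠ 0 → S.card ≤ b1)
    (hmarg : ∀ j : Fin n,
      (∑ S : Finset (Fin n), if j ∈ S then σ1 S else 0) =
        if j ≤ p then 1 - (((p : ℕ) : ℝ) + 1 - b1) / (w (estar j) * Sp) else 0)
    -- σ₂* is a mixed attack strategy satisfying condition (5):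
    (σ2 : E → ℝ)
    (hσ2nn : ∀ e, 0 ≤ σ2 e) (hσ2sum : ∑ e : E, σ2 e = 1)
    (hσ2val : ∀ e : E, σ2 e = if e ∈ Ep then 1 / (w e * Sp) else 0) :
    -- (σ₁*, σ₂*) is a Nash equilibrium:
    (∀ τ2 : E → ℝ, (∀ e, 0 ≤ τ2 e) → (∑ e : E, τ2 e = 1) →
      eLoss M w σ1 τ2 ≤ eLoss M w σ1 σ2) ∧
    (∀ τ1 : Finset (Fin n) → ℝ, (∀ S, 0 ≤ τ1 S) → (∑ S : Finset (Fin n), τ1 S = 1) →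
      (∀ S : Finset (Fin n), τ1 S ≠ 0 → S.card ≤ b1) →
      eLoss M w σ1 σ2 ≤ eLoss M w τ1 σ2) ∧
    -- and the value of the game is (p − b₁)/S_p:
    eLoss M w σ1 σ2 = (((p : ℕ) : ℝ) + 1 - b1) / Sp := by
  classical
  have hw0 : ∀ e, 0 < w e := fun e => (hw e).1
  have hSppos : 0 < Sp := by
    rw [hSp]
    apply Finset.sum_pos
    · intro i _
      have := hw0 (estar i)
      positivity
    · exact ⟨p, Finset.mem_Iic.mpr le_rfl⟩
  -- the unique covering index of a component
  set ie : E → Fin n := fun e => (hcov e).choose with hie_def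
  have hieM : ∀ e, e ∈ M (ie e) := fun e => (hcov e).choose_spec
  have hieu : ∀ (e : E) (i : Fin n), e ∈ M i → i = ie e := by
    intro e i hi
    by_contra h
    exact Finset.disjoint_left.mp (hdisj i (ie e) h) hi (hieM e)
  have hmemb : ∀ (S : Finset (Fin n)) (e : E), e ∈ S.biUnion M ↔ ie e ∈ S := by
    intro S e
    rw [Finset.mem_biUnion]
    constructor
    · rintro ⟨j, hjS, hej⟩; rwa [hieu e j hej] at hjS
    · intro h; exact ⟨ie e, h, hieM e⟩
  have hie_estar : ∀ i, ie (estar i) = i := fun i => (hieu _ i (hestar i).1).symm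
  have hinj : Function.Injective estar := by
    intro i j hij
    rw [← hie_estar i, ← hie_estar j, hij]
  set N : ℝ := (((p : ℕ) : ℝ) + 1 - b1) with hN
  set V : ℝ := N / Sp with hV
  set ρ : Fin n → ℝ :=
    fun j => if j ≤ p then 1 - N / (w (estar j) * Sp) else 0 with hρdef
  have hmarg' : ∀ j : Fin n,
      (∑ S : Finset (Fin n), if j ∈ S then σ1 S else 0) = ρ j := fun j => hmarg j
  -- b1 ≤ p + 1
  have hbp : (b1 : ℝ) ≤ ((p : ℕ) : ℝ) + 1 := by
    rcases Nat.eq_zero_or_pos b1 with h0 | hpos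
    · subst h0; push_cast; positivity
    · have hjn : b1 - 1 < n := by omega
      set j : Fin n := ⟨b1 - 1, hjn⟩ with hj
      have hnum : ((j : ℕ) : ℝ) + 1 - b1 = 0 := by
        have : ((j : ℕ) : ℝ) = (b1 : ℝ) - 1 := by
          rw [hj]
          push_cast [Nat.cast_sub hpos]
          ring
        rw [this]; ring
      have hjp : j ≤ p := by
        apply hpmax j
        rw [hnum, zero_div]
        exact (hw0 _).le
      have : (j : ℕ) ≤ (p : ℕ) := hjp
      have : ((j : ℕ) : ℝ) ≤ ((p : ℕ) : ℝ) := by exact_mod_cast this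
      linarith [hnum]
  have hNnn : 0 ≤ N := by rw [hN]; linarith
  have hVnn : 0 ≤ V := div_nonneg hNnn hSppos.le
  -- expected loss against any attack strategy, for σ1 fixed
  have hLoss : ∀ τ2 : E → ℝ,
      eLoss M w σ1 τ2 = ∑ e : E, τ2 e * (w e * (1 - ρ (ie e))) := by
    intro τ2
    unfold eLoss
    rw [Finset.sum_comm]
    refine Finset.sum_congr rfl fun e _ => ?_
    have h1 : ∀ S : Finset (Fin n),
        σ1 S * τ2 e * (if e ∈ S.biUnion M then 0 else w e)
        = τ2 e * (w e * σ1 S) - τ2 e * (w e * (if ie e ∈ S then σ1 S else 0)) := by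
      intro S
      by_cases h : ie e ∈ S
      · simp [(hmemb S e).mpr h, h]
      · have hnb : e ∉ S.biUnion M := fun hc => h ((hmemb S e).mp hc)
        simp only [hnb, if_neg, h, if_false]
        ring
    rw [Finset.sum_congr rfl fun S _ => h1 S, Finset.sum_sub_distrib,
      ← Finset.mul_sum, ← Finset.mul_sum, ← Finset.mul_sum, ← Finset.mul_sum,
      hσ1sum, hmarg' (ie e)]
    ring
  -- the key bound: expected loss of attacking e is at most V
  have hf : ∀ e : E, w e * (1 - ρ (ie e)) ≤ V := by
    intro e
    have hwe : w e ≤ w (estar (ie e)) := (hestar (ie e)).2 e (hieM e)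
    by_cases hj : ie e ≤ p
    · have hρj : ρ (ie e) = 1 - N / (w (estar (ie e)) * Sp) := by
        rw [hρdef]; simp [hj]
      rw [hρj]
      have hwp : 0 < w (estar (ie e)) := hw0 _
      have h2 : w (estar (ie e)) * (N / (w (estar (ie e)) * Sp)) = N / Sp := by
        field_simp
      have h1 : w e * (N / (w (estar (ie e)) * Sp))
          ≤ w (estar (ie e)) * (N / (w (estar (ie e)) * Sp)) := by
        apply mul_le_mul_of_nonneg_right hwe
        positivity
      rw [hV]
      calc w e * (1 - (1 - N / (w (estar (ie e)) * Sp)))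
          = w e * (N / (w (estar (ie e)) * Sp)) := by ring
        _ ≤ w (estar (ie e)) * (N / (w (estar (ie e)) * Sp)) := h1
        _ = N / Sp := h2
    · have hρj : ρ (ie e) = 0 := by rw [hρdef]; simp [hj]
      rw [hρj]
      have hjp : (p : ℕ) + 1 ≤ ((ie e : Fin n) : ℕ) := by
        rw [Fin.le_def] at hj; omega
      have hqn : (p : ℕ) + 1 < n := lt_of_le_of_lt hjp (ie e).isLt
      set q : Fin n := ⟨(p : ℕ) + 1, hqn⟩ with hq
      have hqp : ¬ q ≤ p := by
        rw [Fin.le_def]; simp [hq]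
      have hfail : w (estar q) <
          (((q : ℕ) : ℝ) + 1 - b1) / (∑ i ∈ Finset.Iic q, 1 / w (estar i)) :=
        not_le.mp (fun hle => hqp (hpmax q hle))
      have hqnot : q ∉ Finset.Iic p := by
        simpa [Finset.mem_Iic] using hqp
      have hIic : Finset.Iic q = insert q (Finset.Iic p) := by
        ext i
        simp only [Finset.mem_Iic, Finset.mem_insert, Fin.le_def, Fin.ext_iff, hq]
        omega
      have hSq : (∑ i ∈ Finset.Iic q, 1 / w (estar i)) = 1 / w (estar q) + Sp := by
        rw [hIic, Finset.sum_insert hqnot, hSp]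
      have hx : 0 < w (estar q) := hw0 _
      have hSqpos : (0 : ℝ) < 1 / w (estar q) + Sp := by positivity
      rw [hSq] at hfail
      have hA : ((q : ℕ) : ℝ) + 1 - b1 = N + 1 := by
        rw [hN, hq]; push_cast; ring
      have h3 : w (estar q) * (1 / w (estar q) + Sp) < N + 1 := by
        rw [← hA]; exact (lt_div_iff₀ hSqpos).mp hfail
      have h4 : w (estar q) * (1 / w (estar q) + Sp) = 1 + w (estar q) * Sp := by
        field_simp
      have h5 : w (estar q) * Sp < N := by linarith
      have hxV : w (estar q) < V := by
        rw [hV]; exact (lt_div_iff₀ hSppos).mpr h5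
      have hqj : q ≤ ie e := by rw [Fin.le_def]; exact hjp
      have hord : w (estar (ie e)) ≤ w (estar q) := horder q (ie e) hqj
      nlinarith
  -- the value of the game
  have hval : eLoss M w σ1 σ2 = V := by
    rw [hLoss σ2]
    have hpt : ∀ e : E, σ2 e * (w e * (1 - ρ (ie e))) = σ2 e * V := by
      intro e
      by_cases he : e ∈ Ep
      · rw [hEp] at he
        obtain ⟨jj, hjj, rfl⟩ := Finset.mem_image.mp he
        have hjp : jj ≤ p := Finset.mem_Iic.mp hjj
        have hwp : 0 < w (estar jj) := hw0 _
        congr 1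
        rw [hie_estar jj, hρdef]
        simp only [hjp, if_true, hV]
        field_simp; ring
      · rw [hσ2val e, if_neg he]
        ring
    rw [Finset.sum_congr rfl fun e _ => hpt e, ← Finset.sum_mul, hσ2sum, one_mul]
  -- expected loss of any monitoring strategy against σ2
  have hLoss2 : ∀ τ1 : Finset (Fin n) → ℝ,
      eLoss M w τ1 σ2
        = ∑ S : Finset (Fin n), τ1 S * (((Finset.Iic p \ S).card : ℝ) / Sp) := by
    intro τ1
    unfold eLoss
    refine Finset.sum_congr rfl fun S _ => ?_
    have hset : Finset.univ.filter (fun e => e ∈ Ep ∧ ie e ∉ S)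
        = (Finset.Iic p \ S).image estar := by
      ext e
      simp only [Finset.mem_filter, Finset.mem_univ, true_and, Finset.mem_image,
        Finset.mem_sdiff]
      constructor
      · rintro ⟨heEp, hieS⟩
        rw [hEp] at heEp
        obtain ⟨jj, hjj, rfl⟩ := Finset.mem_image.mp heEp
        exact ⟨jj, ⟨hjj, by rwa [hie_estar] at hieS⟩, rfl⟩
      · rintro ⟨jj, ⟨hjj, hjjS⟩, rfl⟩
        exact ⟨by rw [hEp]; exact Finset.mem_image_of_mem _ hjj,
          by rwa [hie_estar]⟩
    have hterm : ∀ e : E, τ1 S * σ2 e * (if e ∈ S.biUnion M then 0 else w e)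
        = τ1 S * (if e ∈ Ep ∧ ie e ∉ S then 1 / Sp else 0) := by
      intro e
      rw [hσ2val e]
      by_cases he : e ∈ Ep
      · by_cases hs : ie e ∈ S
        · simp [he, hs, (hmemb S e).mpr hs]
        · have hnb : e ∉ S.biUnion M := fun hc => hs ((hmemb S e).mp hc)
          have hwne : w e ≠ 0 := (hw0 e).ne'
          simp only [he, if_true, hnb, if_neg, hs, not_false_iff, and_true]
          field_simp
      · simp [he]
    rw [Finset.sum_congr rfl fun e _ => hterm e, ← Finset.mul_sum]
    congr 1
    calc (∑ e : E, if e ∈ Ep ∧ ie e ∉ S then (1 / Sp : ℝ) else 0)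
        = ∑ e ∈ Finset.univ.filter (fun e => e ∈ Ep ∧ ie e ∉ S), (1 / Sp : ℝ) :=
          (Finset.sum_filter _ _).symm
      _ = ((Finset.univ.filter (fun e => e ∈ Ep ∧ ie e ∉ S)).card : ℝ) * (1 / Sp) := by
          rw [Finset.sum_const, nsmul_eq_mul]
      _ = ((Finset.Iic p \ S).card : ℝ) / Sp := by
          rw [hset, Finset.card_image_of_injective _ hinj]; ring
  refine ⟨?_, ?_, ?_⟩
  · intro τ2 hnn hsum
    rw [hLoss τ2, hval]
    calc (∑ e : E, τ2 e * (w e * (1 - ρ (ie e))))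
        ≤ ∑ e : E, τ2 e * V :=
          Finset.sum_le_sum fun e _ => mul_le_mul_of_nonneg_left (hf e) (hnn e)
      _ = V := by rw [← Finset.sum_mul, hsum, one_mul]
  · intro τ1 hnn hsum hcard
    rw [hval, hLoss2 τ1]
    have key : ∀ S : Finset (Fin n),
        τ1 S * V ≤ τ1 S * (((Finset.Iic p \ S).card : ℝ) / Sp) := by
      intro S
      rcases eq_or_ne (τ1 S) 0 with h | h
      · simp [h]
      · refine mul_le_mul_of_nonneg_left ?_ (hnn S)
        have hc : (p : ℕ) + 1 ≤ (Finset.Iic p \ S).card + b1 := by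
          have h1 : (Finset.Iic p).card = (p : ℕ) + 1 := Fin.card_Iic p
          have h2 := Finset.le_card_sdiff S (Finset.Iic p)
          have h3 := hcard S h
          omega
        have hcast : N ≤ ((Finset.Iic p \ S).card : ℝ) := by
          have := (Nat.cast_le (α := ℝ)).mpr hc
          push_cast at this
          rw [hN]; linarith
        rw [hV]
        gcongr
    calc V = ∑ S : Finset (Fin n), τ1 S * V := by
          rw [← Finset.sum_mul, hsum, one_mul]
      _ ≤ _ := Finset.sum_le_sum fun S _ => key S
  · rw [hval, hV, hN]


end Stmt6
end

section
/- Proposition 1: Let b_1 ∈ ℕ and b_1' ∈ ℕ be given budgets, and let p (resp. p') be the largest element of Z(b_1) (resp. Z(b_1')). If b_1 < b_1' ≤ n, then p ≤ p'. -/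
open Finset

/-- Proposition 1: For budgets `b₁ < b₁' ≤ n`, the largest element `p` of
`Z(b₁)` is at most the largest element `p'` of `Z(b₁')`.  Nodes are indexed 0-based by
`Fin n`, so the paper's 1-based `p` (resp. `p'`) equals our `(p : ℕ) + 1`
(resp. `(p' : ℕ) + 1`). -/
theorem stmt7
    {n : ℕ} {E : Type*} [Fintype E] [DecidableEq E]
    (M : Fin n → Finset E) (w : E → ℝ)
    (hMne : ∀ i, (M i).Nonempty)
    (hdisj : ∀ i j : Fin n, i ≠ j → Disjoint (M i) (M j))
    (hw : ∀ e, 0 < w e ∧ w e ≤ 1)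
    (estar : Fin n → E)
    (hestar : ∀ i, estar i ∈ M i ∧ ∀ e ∈ M i, w e ≤ w (estar i))
    (horder : ∀ i j : Fin n, i ≤ j → w (estar j) ≤ w (estar i))
    (b1 b1' : ℕ) (hbb : b1 < b1') (hb1' : b1' ≤ n)
    (p : Fin n)
    (hpZ : (((p : ℕ) : ℝ) + 1 - b1) / (∑ i ∈ Finset.Iic p, 1 / w (estar i)) ≤ w (estar p))
    (hpmax : ∀ j : Fin n,
      (((j : ℕ) : ℝ) + 1 - b1) / (∑ i ∈ Finset.Iic j, 1 / w (estar i)) ≤ w (estar j) → j ≤ p)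
    (p' : Fin n)
    (hp'Z : (((p' : ℕ) : ℝ) + 1 - b1') / (∑ i ∈ Finset.Iic p', 1 / w (estar i)) ≤ w (estar p'))
    (hp'max : ∀ j : Fin n,
      (((j : ℕ) : ℝ) + 1 - b1') / (∑ i ∈ Finset.Iic j, 1 / w (estar i)) ≤ w (estar j) → j ≤ p') :
    p ≤ p' := by
  apply hp'max
  refine le_trans (div_le_div_of_nonneg_right ?_ ?_) hpZ
  · have : (b1 : ℝ) ≤ b1' := by exact_mod_cast hbb.le
    linarith
  · exact Finset.sum_nonneg fun i _ => le_of_lt (one_div_pos.mpr (hw (estar i)).1)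
end

section
/- Single-sensor upper bound: let b_1 = 1 and let x : 𝒱 → ℝ satisfy x ≥ 0 and the primal feasibility constraints Σ_{v ∈ 𝒱, e ∉ E_v} x_v ≤ 1/w_e for all e ∈ ℰ, and suppose J := Σ_{v∈𝒱} x_v > 0. Define the mixed monitoring strategy σ_1(v) = x_v/J. Then for every component e ∈ ℰ, L(σ_1, e) ≤ 1/J. -/
open Finset

/-- Single-sensor upper bound.  If `x ≥ 0` is primal feasible
(`∑_{v : e ∉ E_v} x_v ≤ 1/w_e` for all `e`) with `J = ∑_v x_v > 0`, then the mixed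
monitoring strategy `σ₁(v) = x_v / J` satisfies `L(σ₁, e) ≤ 1/J` for every component `e`. -/
theorem stmt8 {V E : Type*} [Fintype V] [Fintype E] [DecidableEq E]
    (M : V → Finset E) (hMne : ∀ v, (M v).Nonempty)
    (w : E → ℝ) (hw : ∀ e, 0 < w e ∧ w e ≤ 1)
    (x : V → ℝ) (hx : ∀ v, 0 ≤ x v)
    (hfeas : ∀ e : E, (∑ v ∈ Finset.univ.filter (fun v => e ∉ M v), x v) ≤ 1 / w e)
    (J : ℝ) (hJ : J = ∑ v : V, x v) (hJpos : 0 < J)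
    (σ1 : V → ℝ) (hσ1 : ∀ v, σ1 v = x v / J) :
    ∀ e : E, (∑ v : V, σ1 v * (if e ∈ M v then 0 else w e)) ≤ 1 / J := by
  intro e
  have hwe := (hw e).1
  have key : (∑ v : V, σ1 v * (if e ∈ M v then 0 else w e))
      = (w e / J) * ∑ v ∈ Finset.univ.filter (fun v => e ∉ M v), x v := by
    rw [Finset.mul_sum]
    rw [← Finset.sum_filter_add_sum_filter_not Finset.univ (fun v => e ∉ M v)]
    have h1 : ∀ v ∈ Finset.univ.filter (fun v => e ∉ M v),
        σ1 v * (if e ∈ M v then 0 else w e) = w e / J * x v := by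
      intro v hv
      simp only [Finset.mem_filter] at hv
      rw [if_neg hv.2, hσ1]; ring
    have h2 : ∀ v ∈ Finset.univ.filter (fun v => ¬ e ∉ M v),
        σ1 v * (if e ∈ M v then 0 else w e) = 0 := by
      intro v hv
      simp only [Finset.mem_filter, not_not] at hv
      rw [if_pos hv.2, mul_zero]
    rw [Finset.sum_congr rfl h1, Finset.sum_congr rfl h2, Finset.sum_const_zero, add_zero]
  rw [key]
  calc (w e / J) * ∑ v ∈ Finset.univ.filter (fun v => e ∉ M v), x v
      ≤ (w e / J) * (1 / w e) := by
        apply mul_le_mul_of_nonneg_left (hfeas e)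
        positivity
    _ = 1 / J := by field_simp
end

section
/- Single-sensor lower bound: let b_1 = 1 and let y : ℰ → ℝ satisfy y ≥ 0 and the dual feasibility constraints Σ_{e ∈ ℰ, e ∉ E_v} y_e ≥ 1 for all v ∈ 𝒱, and set J := Σ_{e∈ℰ} y_e/w_e (so J > 0). Define the mixed attack strategy σ_2(e) = y_e/(J w_e), which is a probability distribution on ℰ. Then for every node v ∈ 𝒱, L(v, σ_2) ≥ 1/J. -/
open Finset

/-- Single-sensor lower bound.  If `y ≥ 0` is dual feasible
(`∑_{e ∉ E_v} y_e ≥ 1` for all `v`) and `J = ∑_e y_e / w_e` (so `J > 0`), then the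
mixed attack strategy `σ₂(e) = y_e / (J w_e)` is a probability distribution on `ℰ` and
satisfies `L(v, σ₂) ≥ 1/J` for every node `v`. -/
theorem stmt9 {V E : Type*} [Fintype V] [Fintype E] [DecidableEq E]
    (M : V → Finset E) (hMne : ∀ v, (M v).Nonempty)
    (w : E → ℝ) (hw : ∀ e, 0 < w e ∧ w e ≤ 1)
    (y : E → ℝ) (hy : ∀ e, 0 ≤ y e)
    (hfeas : ∀ v : V, 1 ≤ ∑ e ∈ Finset.univ.filter (fun e => e ∉ M v), y e)
    (J : ℝ) (hJ : J = ∑ e : E, y e / w e) (hJpos : 0 < J)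
    (σ2 : E → ℝ) (hσ2 : ∀ e, σ2 e = y e / (J * w e)) :
    ((∀ e, 0 ≤ σ2 e) ∧ ∑ e : E, σ2 e = 1) ∧
    ∀ v : V, 1 / J ≤ ∑ e : E, σ2 e * (if e ∈ M v then 0 else w e) := by
  have hwpos := fun e => (hw e).1
  have hnn : ∀ e, 0 ≤ σ2 e := fun e => by
    rw [hσ2]; exact div_nonneg (hy e) (mul_nonneg hJpos.le (hwpos e).le)
  have hsum : ∑ e : E, σ2 e = 1 := by
    have : ∑ e : E, σ2 e = (∑ e : E, y e / w e) / J := by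
      rw [Finset.sum_div]
      refine Finset.sum_congr rfl fun e _ => ?_
      rw [hσ2]; field_simp
    rw [this, ← hJ, div_self hJpos.ne']
  refine ⟨⟨hnn, hsum⟩, fun v => ?_⟩
  have key : ∑ e : E, σ2 e * (if e ∈ M v then 0 else w e)
      = (∑ e ∈ Finset.univ.filter (fun e => e ∉ M v), y e) / J := by
    rw [Finset.sum_div, ← Finset.sum_filter_of_ne (p := fun e => e ∉ M v)]
    · refine Finset.sum_congr rfl fun e he => ?_
      simp only [Finset.mem_filter] at he
      rw [hσ2, if_neg he.2]
      field_simp [hJpos.ne', (hwpos e).ne']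
    · intro e _ h
      by_contra hm
      rw [if_pos hm, mul_zero] at h
      exact h rfl
  rw [key]
  exact div_le_div_of_nonneg_right (hfeas v) hJpos.le
end

section
/- Proposition 2: Let b_1 = 1 and assume E_v ≠ ℰ for every v ∈ 𝒱. Let x* ≥ 0 satisfy Σ_{v ∈ 𝒱, e ∉ E_v} x*_v ≤ 1/w_e for all e ∈ ℰ, let y* ≥ 0 satisfy Σ_{e ∈ ℰ, e ∉ E_v} y*_e ≥ 1 for all v ∈ 𝒱, and suppose their objective values coincide: Σ_{v∈𝒱} x*_v = Σ_{e∈ℰ} y*_e/w_e = J* (as holds for optimal primal and dual solutions by strong LP duality; J* > 0). Then the strategy profile defined by σ̄_1*(v) = x*_v/J* and σ̄_2*(e) = y*_e/(J* w_e) is a Nash equilibrium of the game, and the value of the game is L(σ̄_1*, σ̄_2*) = 1/J*. -/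
open Finset

namespace Stmt10

/-- Expected loss of the single-sensor monitoring game (`b₁ = 1`), where Player 1's
pure actions are single nodes. -/
noncomputable def eLoss {V E : Type*} [Fintype V] [Fintype E] [DecidableEq E]
    (M : V → Finset E) (w : E → ℝ) (σ1 : V → ℝ) (σ2 : E → ℝ) : ℝ :=
  ∑ v : V, ∑ e : E, σ1 v * σ2 e * (if e ∈ M v then 0 else w e)

/-- Proposition 2: For the single-sensor game (`b₁ = 1`), with `E_v ≠ ℰ`
for all `v`, a primal feasible `x* ≥ 0` and a dual feasible `y* ≥ 0` whose objective
values coincide (`∑_v x*_v = ∑_e y*_e / w_e = J* > 0`), the strategy profile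
`σ̄₁*(v) = x*_v / J*`, `σ̄₂*(e) = y*_e / (J* w_e)` is a Nash equilibrium of the game,
and the value of the game is `1 / J*`. -/
theorem stmt10 {V E : Type*} [Fintype V] [Fintype E] [DecidableEq E]
    (M : V → Finset E) (hMne : ∀ v, (M v).Nonempty)
    (hMprop : ∀ v : V, M v ≠ Finset.univ)
    (w : E → ℝ) (hw : ∀ e, 0 < w e ∧ w e ≤ 1)
    (x : V → ℝ) (hx : ∀ v, 0 ≤ x v)
    (hxfeas : ∀ e : E, (∑ v ∈ Finset.univ.filter (fun v => e ∉ M v), x v) ≤ 1 / w e)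
    (y : E → ℝ) (hy : ∀ e, 0 ≤ y e)
    (hyfeas : ∀ v : V, 1 ≤ ∑ e ∈ Finset.univ.filter (fun e => e ∉ M v), y e)
    (J : ℝ) (hJx : ∑ v : V, x v = J) (hJy : ∑ e : E, y e / w e = J) (hJpos : 0 < J)
    (σ1 : V → ℝ) (hσ1 : ∀ v, σ1 v = x v / J)
    (σ2 : E → ℝ) (hσ2 : ∀ e, σ2 e = y e / (J * w e)) :
    -- σ̄₁*, σ̄₂* are probability distributions:
    ((∀ v, 0 ≤ σ1 v) ∧ ∑ v : V, σ1 v = 1) ∧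
    ((∀ e, 0 ≤ σ2 e) ∧ ∑ e : E, σ2 e = 1) ∧
    -- (σ̄₁*, σ̄₂*) is a Nash equilibrium:
    (∀ τ2 : E → ℝ, (∀ e, 0 ≤ τ2 e) → (∑ e : E, τ2 e = 1) →
      eLoss M w σ1 τ2 ≤ eLoss M w σ1 σ2) ∧
    (∀ τ1 : V → ℝ, (∀ v, 0 ≤ τ1 v) → (∑ v : V, τ1 v = 1) →
      eLoss M w σ1 σ2 ≤ eLoss M w τ1 σ2) ∧
    -- the value of the game is 1/J*:
    eLoss M w σ1 σ2 = 1 / J := by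
  have hw' : ∀ e, 0 < w e := fun e => (hw e).1
  have hσ1nn : ∀ v, 0 ≤ σ1 v := fun v => by
    rw [hσ1]; exact div_nonneg (hx v) hJpos.le
  have hσ1sum : ∑ v : V, σ1 v = 1 := by
    simp only [hσ1, ← Finset.sum_div, hJx, div_self hJpos.ne']
  have hσ2nn : ∀ e, 0 ≤ σ2 e := fun e => by
    rw [hσ2]; exact div_nonneg (hy e) (mul_pos hJpos (hw' e)).le
  have hσ2sum : ∑ e : E, σ2 e = 1 := by
    have h : ∀ e : E, σ2 e = (y e / w e) / J := fun e => by
      rw [hσ2]; field_simp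
    rw [Finset.sum_congr rfl fun e _ => h e, ← Finset.sum_div, hJy,
      div_self hJpos.ne']
  -- rewrite eLoss from Player 2's perspective
  have key1 : ∀ τ2 : E → ℝ, eLoss M w σ1 τ2 =
      ∑ e : E, τ2 e * (w e * ∑ v ∈ Finset.univ.filter (fun v => e ∉ M v), σ1 v) := by
    intro τ2
    rw [eLoss, Finset.sum_comm]
    refine Finset.sum_congr rfl fun e _ => ?_
    rw [Finset.mul_sum, Finset.mul_sum, Finset.sum_filter]
    refine Finset.sum_congr rfl fun v _ => ?_
    by_cases h : e ∈ M v <;> simp [h] <;> ring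
  -- rewrite eLoss from Player 1's perspective
  have key2 : ∀ τ1 : V → ℝ, eLoss M w τ1 σ2 =
      ∑ v : V, τ1 v * ∑ e ∈ Finset.univ.filter (fun e => e ∉ M v), σ2 e * w e := by
    intro τ1
    rw [eLoss]
    refine Finset.sum_congr rfl fun v _ => ?_
    rw [Finset.mul_sum, Finset.sum_filter]
    refine Finset.sum_congr rfl fun e _ => ?_
    by_cases h : e ∈ M v <;> simp [h] <;> ring
  -- bound for player 2 deviations
  have bnd1 : ∀ τ2 : E → ℝ, (∀ e, 0 ≤ τ2 e) → (∑ e : E, τ2 e = 1) →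
      eLoss M w σ1 τ2 ≤ 1 / J := by
    intro τ2 hnn hsum
    rw [key1]
    calc ∑ e : E, τ2 e * (w e * ∑ v ∈ Finset.univ.filter (fun v => e ∉ M v), σ1 v)
        ≤ ∑ e : E, τ2 e * (1 / J) := by
          refine Finset.sum_le_sum fun e _ => mul_le_mul_of_nonneg_left ?_ (hnn e)
          have h1 : ∑ v ∈ Finset.univ.filter (fun v => e ∉ M v), σ1 v
              = (∑ v ∈ Finset.univ.filter (fun v => e ∉ M v), x v) / J := by
            rw [Finset.sum_div]; exact Finset.sum_congr rfl fun v _ => hσ1 v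
          rw [h1]
          have := hxfeas e
          calc w e * ((∑ v ∈ Finset.univ.filter (fun v => e ∉ M v), x v) / J)
              ≤ w e * ((1 / w e) / J) := by
                refine mul_le_mul_of_nonneg_left ?_ (hw' e).le
                gcongr
            _ = 1 / J := by
                have h2 := (hw' e).ne'
                field_simp
      _ = 1 / J := by rw [← Finset.sum_mul, hsum, one_mul]
  -- bound for player 1 deviations
  have bnd2 : ∀ τ1 : V → ℝ, (∀ v, 0 ≤ τ1 v) → (∑ v : V, τ1 v = 1) →
      1 / J ≤ eLoss M w τ1 σ2 := by
    intro τ1 hnn hsum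
    rw [key2]
    calc (1 : ℝ) / J = ∑ v : V, τ1 v * (1 / J) := by
          rw [← Finset.sum_mul, hsum, one_mul]
      _ ≤ ∑ v : V, τ1 v * ∑ e ∈ Finset.univ.filter (fun e => e ∉ M v), σ2 e * w e := by
          refine Finset.sum_le_sum fun v _ => mul_le_mul_of_nonneg_left ?_ (hnn v)
          have h1 : ∑ e ∈ Finset.univ.filter (fun e => e ∉ M v), σ2 e * w e
              = (∑ e ∈ Finset.univ.filter (fun e => e ∉ M v), y e) / J := by
            rw [Finset.sum_div]
            refine Finset.sum_congr rfl fun e _ => ?_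
            have h2 := (hw' e).ne'
            rw [hσ2]; field_simp
          rw [h1]
          have := hyfeas v
          rw [div_le_div_iff₀ hJpos hJpos] at *
          nlinarith [hJpos]
  have hval : eLoss M w σ1 σ2 = 1 / J :=
    le_antisymm (bnd1 σ2 hσ2nn hσ2sum) (bnd2 σ1 hσ1nn hσ1sum)
  refine ⟨⟨hσ1nn, hσ1sum⟩, ⟨hσ2nn, hσ2sum⟩, ?_, ?_, hval⟩
  · intro τ2 h1 h2; rw [hval]; exact bnd1 τ2 h1 h2
  · intro τ1 h1 h2; rw [hval]; exact bnd2 τ1 h1 h2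

end Stmt10
end

section
/- Proposition 3: A pure strategy profile (V*, e*) — with V* ⊆ 𝒱, |V*| ≤ b_1, and e* ∈ ℰ — is a Nash equilibrium of the game if and only if V* is a set cover (i.e., E_{V*} = ℰ) and |V*| ≤ b_1. -/
open Finset

namespace Stmt11

/-- Loss function `l(V, e)` of the monitoring game. -/
noncomputable def loss {V E : Type*} [DecidableEq E]
    (M : V → Finset E) (w : E → ℝ) (S : Finset V) (e : E) : ℝ :=
  if e ∈ S.biUnion M then 0 else w e

/-- Proposition 3: A pure strategy profile `(V*, e*)` with `|V*| ≤ b₁`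
is a Nash equilibrium of the game if and only if `V*` is a set cover (`E_{V*} = ℰ`)
and `|V*| ≤ b₁`.  (`1 ≤ b₁`, i.e. Player 1 has at least one sensor at her disposal.) -/
theorem stmt11 {V E : Type*} [Fintype V] [Fintype E] [DecidableEq E]
    (M : V → Finset E) (hMne : ∀ v, (M v).Nonempty)
    (hcov : ∀ e : E, ∃ v, e ∈ M v)
    (w : E → ℝ) (hw : ∀ e, 0 < w e ∧ w e ≤ 1)
    (b1 : ℕ) (hb1 : 1 ≤ b1)
    (Vstar : Finset V) (hVstar : Vstar.card ≤ b1) (estar : E) :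
    -- (V*, e*) is a pure Nash equilibrium ↔ V* is a set cover with |V*| ≤ b₁
    ((∀ e : E, loss M w Vstar e ≤ loss M w Vstar estar) ∧
     (∀ S : Finset V, S.card ≤ b1 → loss M w Vstar estar ≤ loss M w S estar))
      ↔ (Vstar.biUnion M = Finset.univ ∧ Vstar.card ≤ b1) := by
  constructor
  · rintro ⟨h1, h2⟩
    refine ⟨?_, hVstar⟩
    by_contra hne
    obtain ⟨e, he⟩ : ∃ e, e ∉ Vstar.biUnion M := by
      by_contra h
      push_neg at h
      exact hne (Finset.eq_univ_of_forall h)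
    · -- e not covered
      have hle := h1 e
      have hloss_e : loss M w Vstar e = w e := by simp [loss, he]
      have hpos : 0 < loss M w Vstar estar := by rw [hloss_e] at hle; exact lt_of_lt_of_le (hw e).1 hle
      have hestar : estar ∉ Vstar.biUnion M := by
        intro hmem
        simp [loss, hmem] at hpos
      obtain ⟨v, hv⟩ := hcov estar
      have := h2 {v} (by simpa using hb1)
      have h0 : loss M w {v} estar = 0 := by
        simp [loss, hv]
      rw [h0] at this
      exact absurd (lt_of_lt_of_le hpos this) (lt_irrefl 0)
  · rintro ⟨hcover, -⟩
    constructor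
    · intro e
      have : loss M w Vstar e = 0 := by simp [loss, hcover]
      have : loss M w Vstar estar = 0 := by simp [loss, hcover]
      simp_all [loss, hcover]
    · intro S hS
      have : loss M w Vstar estar = 0 := by simp [loss, hcover]
      rw [this]
      unfold loss
      split
      · exact le_rfl
      · exact (hw estar).1.le

end Stmt11
end

section
/- Set-cover strategy loss bound (inequality (9)): let V* ⊆ 𝒱 be a set cover with |V*| = n* and b_1 ≤ n*, and let σ_1^ε be any mixed strategy of Player 1 whose marginals satisfy ρ_{σ_1^ε}(v) = b_1/n* for v ∈ V* and ρ_{σ_1^ε}(v) = 0 for v ∉ V*. Then for every mixed attack strategy σ_2, L(σ_1^ε, σ_2) ≤ w_max (n* − b_1)/n*, where w_max = max_{e∈ℰ} w_e. -/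
/-!
Every target `e` is monitored by some `v ∈ V*`, so `e` is left uncovered only when `v` is not
picked, which happens with probability `1 - ρ(v) = (n* - b₁)/n*`. Hence the expected loss on `e`
is at most `w_e (n* - b₁)/n* ≤ w_max (n* - b₁)/n*`, and averaging over `σ₂` keeps this bound.
-/

open Finset

namespace Stmt13

/-- Expected loss `L(σ₁, σ₂)` of the monitoring game. -/
noncomputable def eLoss {V E : Type*} [Fintype V] [Fintype E] [DecidableEq E]
    (M : V → Finset E) (w : E → ℝ) (σ1 : Finset V → ℝ) (σ2 : E → ℝ) : ℝ :=
  ∑ S : Finset V, ∑ e : E, σ1 S * σ2 e * (if e ∈ S.biUnion M then 0 else w e)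

def loss {V E : Type*} [DecidableEq E] (M : V → Finset E) (w : E → ℝ) (S : Finset V) (e : E) :
    ℝ :=
  if e ∈ S.biUnion M then 0 else w e

def marginal {V : Type*} [Fintype V] [DecidableEq V] (σ1 : Finset V → ℝ) (v : V) : ℝ :=
  ∑ S : Finset V, if v ∈ S then σ1 S else 0

theorem loss_le_of_mem {V E : Type*} [DecidableEq V] [DecidableEq E] (M : V → Finset E)
    (w : E → ℝ) {S : Finset V} {e : E} {v : V} (hev : e ∈ M v) (hw : 0 ≤ w e) :
    loss M w S e ≤ if v ∈ S then 0 else w e := by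
  unfold loss
  split_ifs with hcov hvS hvS
  · exact le_rfl
  · exact hw
  · exact absurd (Finset.mem_biUnion.mpr ⟨v, hvS, hev⟩) hcov
  · exact le_rfl

section

variable {V E : Type*} [Fintype V] [DecidableEq E] (M : V → Finset E) (w : E → ℝ)

theorem sum_mul_loss_le_of_mem [DecidableEq V] {σ1 : Finset V → ℝ} (hσ1nn : ∀ S, 0 ≤ σ1 S)
    {e : E} {v : V} (hev : e ∈ M v) (hw : 0 ≤ w e) :
    ∑ S : Finset V, σ1 S * loss M w S e ≤ w e * (∑ S, σ1 S - marginal σ1 v) :=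
  calc ∑ S : Finset V, σ1 S * loss M w S e
      ≤ ∑ S : Finset V, σ1 S * if v ∈ S then 0 else w e :=
        sum_le_sum fun S _ ↦ mul_le_mul_of_nonneg_left (loss_le_of_mem M w hev hw) (hσ1nn S)
    _ = w e * (∑ S, σ1 S - marginal σ1 v) := by
        rw [marginal, ← Finset.sum_sub_distrib, Finset.mul_sum]
        refine Finset.sum_congr rfl fun S _ ↦ ?_
        split_ifs <;> ring

theorem eLoss_eq_sum_mul_sum [Fintype E] (σ1 : Finset V → ℝ) (σ2 : E → ℝ) :
    eLoss M w σ1 σ2 = ∑ e : E, σ2 e * ∑ S : Finset V, σ1 S * loss M w S e := by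
  rw [eLoss, Finset.sum_comm]
  simp only [loss, Finset.mul_sum, mul_left_comm, mul_assoc]

theorem eLoss_le_of_forall_le [Fintype E] {σ1 : Finset V → ℝ} {σ2 : E → ℝ} {B : ℝ}
    (hσ2nn : ∀ e, 0 ≤ σ2 e) (hσ2sum : ∑ e, σ2 e = 1)
    (hB : ∀ e, ∑ S : Finset V, σ1 S * loss M w S e ≤ B) :
    eLoss M w σ1 σ2 ≤ B :=
  calc eLoss M w σ1 σ2 ≤ ∑ e : E, σ2 e * B := by
        rw [eLoss_eq_sum_mul_sum]
        exact Finset.sum_le_sum fun e _ ↦ mul_le_mul_of_nonneg_left (hB e) (hσ2nn e)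
    _ = B := by rw [← Finset.sum_mul, hσ2sum, one_mul]

end

theorem stmt13_general {V E : Type*} [Fintype V] [DecidableEq V] [Fintype E] [DecidableEq E]
    [Nonempty E]
    (M : V → Finset E)
    (w : E → ℝ) (hw : ∀ e, 0 < w e ∧ w e ≤ 1)
    (b1 : ℕ)
    (Vstar : Finset V) (hVcover : Vstar.biUnion M = Finset.univ)
    (nstar : ℕ) (hn : nstar = Vstar.card) (hbn : b1 ≤ nstar)
    (σ1 : Finset V → ℝ)
    (hσ1nn : ∀ S, 0 ≤ σ1 S) (hσ1sum : ∑ S : Finset V, σ1 S = 1)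
    (hmarg : ∀ v : V, (∑ S : Finset V, if v ∈ S then σ1 S else 0) =
      if v ∈ Vstar then (b1 : ℝ) / nstar else 0) :
    ∀ σ2 : E → ℝ, (∀ e, 0 ≤ σ2 e) → (∑ e : E, σ2 e = 1) →
      eLoss M w σ1 σ2 ≤
        (Finset.univ.sup' Finset.univ_nonempty w) * (((nstar : ℝ) - b1) / nstar) := by
  intro σ2 hσ2nn hσ2sum
  have hcover : ∀ e, ∃ v ∈ Vstar, e ∈ M v := fun e ↦
    Finset.mem_biUnion.mp (hVcover ▸ Finset.mem_univ e)
  have hnpos : (0 : ℝ) < nstar := by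
    obtain ⟨v, hv, -⟩ := hcover (Classical.arbitrary E)
    exact_mod_cast hn ▸ Finset.card_pos.mpr ⟨v, hv⟩
  have hgap : 0 ≤ ((nstar : ℝ) - b1) / nstar :=
    div_nonneg (sub_nonneg.mpr (by exact_mod_cast hbn)) hnpos.le
  refine eLoss_le_of_forall_le M w hσ2nn hσ2sum fun e ↦ ?_
  obtain ⟨v, hv, hev⟩ := hcover e
  calc ∑ S, σ1 S * loss M w S e ≤ w e * (∑ S, σ1 S - marginal σ1 v) :=
        sum_mul_loss_le_of_mem M w hσ1nn hev (hw e).1.le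
    _ = w e * (((nstar : ℝ) - b1) / nstar) := by
        rw [marginal, hσ1sum, hmarg v, if_pos hv, sub_div, div_self hnpos.ne']
    _ ≤ _ := mul_le_mul_of_nonneg_right (Finset.le_sup' w (Finset.mem_univ e)) hgap

/-- inequality (9): If `V*` is a set cover with `|V*| = n*`, `b₁ ≤ n*`,
and `σ₁^ε` is any mixed strategy of Player 1 whose marginals equal `b₁/n*` on `V*` and
`0` off `V*`, then for every mixed attack strategy `σ₂`,
`L(σ₁^ε, σ₂) ≤ w_max (n* − b₁)/n*`. -/
theorem stmt13 {V E : Type*} [Fintype V] [DecidableEq V] [Fintype E] [DecidableEq E]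
    [Nonempty E]
    (M : V → Finset E) (hMne : ∀ v, (M v).Nonempty)
    (hcov : ∀ e : E, ∃ v, e ∈ M v)
    (w : E → ℝ) (hw : ∀ e, 0 < w e ∧ w e ≤ 1)
    (b1 : ℕ)
    (Vstar : Finset V) (hVcover : Vstar.biUnion M = Finset.univ)
    (nstar : ℕ) (hn : nstar = Vstar.card) (hbn : b1 ≤ nstar)
    (σ1 : Finset V → ℝ)
    (hσ1nn : ∀ S, 0 ≤ σ1 S) (hσ1sum : ∑ S : Finset V, σ1 S = 1)
    (hσ1card : ∀ S : Finset V, σ1 S ≠ 0 → S.card ≤ b1)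
    (hmarg : ∀ v : V, (∑ S : Finset V, if v ∈ S then σ1 S else 0) =
      if v ∈ Vstar then (b1 : ℝ) / nstar else 0) :
    ∀ σ2 : E → ℝ, (∀ e, 0 ≤ σ2 e) → (∑ e : E, σ2 e = 1) →
      eLoss M w σ1 σ2 ≤
        (Finset.univ.sup' Finset.univ_nonempty w) * (((nstar : ℝ) - b1) / nstar) :=
  stmt13_general M w hw b1 Vstar hVcover nstar hn hbn σ1 hσ1nn hσ1sum hmarg

end Stmt13
end

section
/- Set-packing strategy payoff bound (inequality (10)): let E* ⊆ ℰ be a set packing with |E*| = m* ≥ 1, and let σ_2^ε be the uniform attack strategy σ_2^ε(e) = 1/m* for e ∈ E* and 0 otherwise. Then for every pure action V ⊆ 𝒱 with |V| ≤ b_1, L(V, σ_2^ε) ≥ w_min · max{0, m* − b_1}/m*, where w_min = min_{e∈ℰ} w_e. -/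
open Finset

/-- inequality (10): If `E*` is a set packing with `|E*| = m* ≥ 1` and
`σ₂^ε` is the uniform attack strategy on `E*`, then for every pure action `V` with
`|V| ≤ b₁`, `L(V, σ₂^ε) ≥ w_min · max{0, m* − b₁}/m*`. -/
theorem stmt14 {V E : Type*} [Fintype V] [Fintype E] [DecidableEq E] [Nonempty E]
    (M : V → Finset E) (hMne : ∀ v, (M v).Nonempty)
    (w : E → ℝ) (hw : ∀ e, 0 < w e ∧ w e ≤ 1)
    (b1 : ℕ)
    (Estar : Finset E) (hpack : ∀ v : V, (M v ∩ Estar).card ≤ 1)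
    (mstar : ℕ) (hm : mstar = Estar.card) (hm1 : 1 ≤ mstar)
    (σ2 : E → ℝ)
    (hσ2 : ∀ e : E, σ2 e = if e ∈ Estar then 1 / (mstar : ℝ) else 0) :
    ∀ S : Finset V, S.card ≤ b1 →
      (Finset.univ.inf' Finset.univ_nonempty w) * max 0 ((mstar : ℝ) - b1) / mstar ≤
        ∑ e : E, σ2 e * (if e ∈ S.biUnion M then 0 else w e) := by
  intro S hS
  set C := S.biUnion M with hC
  set wmin := Finset.univ.inf' Finset.univ_nonempty w with hwmin
  have hwmin_le : ∀ e, wmin ≤ w e := fun e => Finset.inf'_le _ (Finset.mem_univ e)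
  have hwmin_pos : 0 < wmin := by
    rw [hwmin, Finset.lt_inf'_iff]
    exact fun e _ => (hw e).1
  have hm0 : (0:ℝ) < mstar := by exact_mod_cast hm1
  -- rewrite the sum
  have hsum : ∑ e : E, σ2 e * (if e ∈ C then 0 else w e)
      = (1 / (mstar:ℝ)) * ∑ e ∈ Estar \ C, w e := by
    rw [Finset.mul_sum]
    rw [← Finset.sum_subset (Finset.subset_univ (Estar \ C))]
    · refine Finset.sum_congr rfl fun e he => ?_
      rw [Finset.mem_sdiff] at he
      rw [hσ2 e]
      simp [he.1, he.2]
    · intro e _ he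
      rw [hσ2 e]
      by_cases h1 : e ∈ Estar
      · have h2 : e ∈ C := by
          by_contra h2
          exact he (Finset.mem_sdiff.2 ⟨h1, h2⟩)
        simp [h1, h2]
      · simp [h1]
  -- cardinality bound
  have hinter : (Estar ∩ C).card ≤ b1 := by
    have hsub : Estar ∩ C ⊆ S.biUnion (fun v => M v ∩ Estar) := by
      intro e he
      rw [Finset.mem_inter] at he
      rcases Finset.mem_biUnion.1 he.2 with ⟨v, hv, hev⟩
      exact Finset.mem_biUnion.2 ⟨v, hv, Finset.mem_inter.2 ⟨hev, he.1⟩⟩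
    calc (Estar ∩ C).card ≤ (S.biUnion (fun v => M v ∩ Estar)).card :=
          Finset.card_le_card hsub
      _ ≤ ∑ v ∈ S, (M v ∩ Estar).card := Finset.card_biUnion_le
      _ ≤ ∑ v ∈ S, 1 := Finset.sum_le_sum fun v _ => hpack v
      _ = S.card := by simp
      _ ≤ b1 := hS
  have hcards : (Estar \ C).card + (Estar ∩ C).card = Estar.card :=
    Finset.card_sdiff_add_card_inter _ _
  have hcard_ge : max 0 ((mstar:ℝ) - b1) ≤ ((Estar \ C).card : ℝ) := by
    apply max_le
    · exact_mod_cast Nat.zero_le _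
    · have : (Estar.card : ℝ) ≤ ((Estar \ C).card : ℝ) + b1 := by
        have : Estar.card ≤ (Estar \ C).card + b1 := by omega
        exact_mod_cast this
      rw [hm]; linarith
  -- sum lower bound
  have hsum_ge : wmin * ((Estar \ C).card : ℝ) ≤ ∑ e ∈ Estar \ C, w e := by
    calc wmin * ((Estar \ C).card : ℝ) = ∑ _e ∈ Estar \ C, wmin := by
          rw [Finset.sum_const, nsmul_eq_mul, mul_comm]
      _ ≤ ∑ e ∈ Estar \ C, w e := Finset.sum_le_sum fun e _ => hwmin_le e
  rw [hsum]
  have h1 : wmin * max 0 ((mstar:ℝ) - b1) ≤ wmin * ((Estar \ C).card : ℝ) :=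
    mul_le_mul_of_nonneg_left hcard_ge hwmin_pos.le
  calc wmin * max 0 ((mstar:ℝ) - b1) / mstar
      ≤ wmin * ((Estar \ C).card : ℝ) / mstar := by
        apply div_le_div_of_nonneg_right h1 hm0.le |>.trans_eq rfl
    _ ≤ (1 / (mstar:ℝ)) * ∑ e ∈ Estar \ C, w e := by
        rw [div_eq_mul_inv, one_div, mul_comm ((mstar:ℝ)⁻¹) _, ← div_eq_mul_inv]
        exact div_le_div_of_nonneg_right hsum_ge hm0.le |>.trans_eq rfl
end

section
/- Theorem 2: Let V* be a minimum set cover with n* = |V*|, let E* be a maximum set packing with m* = |E*|, and assume b_1 < n* (no set cover of size at most b_1 exists). Then any strategy profile (σ_1^ε, σ_2^ε) satisfying ρ_{σ_1^ε}(v) = b_1/n* for v ∈ V*, ρ_{σ_1^ε}(v) = 0 for v ∉ V*, and σ_2^ε(e) = 1/m* for e ∈ E*, σ_2^ε(e) = 0 otherwise, is an ε-Nash equilibrium of the game with ε = b_1 w_min (n* − max{b_1, m*})/(n* max{b_1, m*}) + Δ_w (n* − b_1)/n*, where w_min = min_e w_e, w_max = max_e w_e, Δ_w = w_max − w_min. Furthermore,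 for every mixed attack strategy σ_2, L(σ_1^ε, σ_2) ≤ w_max (n* − b_1)/n*. -/
open Finset

namespace Stmt15

/-- Expected loss `L(σ₁, σ₂)` of the monitoring game. -/
noncomputable def eLoss {V E : Type*} [Fintype V] [Fintype E] [DecidableEq E]
    (M : V → Finset E) (w : E → ℝ) (σ1 : Finset V → ℝ) (σ2 : E → ℝ) : ℝ :=
  ∑ S : Finset V, ∑ e : E, σ1 S * σ2 e * (if e ∈ S.biUnion M then 0 else w e)

/-- `σ` is a mixed strategy of Player 1 with budget `b₁`. -/
def IsMixed1 {V : Type*} [Fintype V] (b1 : ℕ) (σ : Finset V → ℝ) : Prop :=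
  (∀ S, 0 ≤ σ S) ∧ (∑ S : Finset V, σ S = 1) ∧ ∀ S : Finset V, σ S ≠ 0 → S.card ≤ b1

/-- `σ` is a mixed strategy of Player 2. -/
def IsMixed2 {E : Type*} [Fintype E] (σ : E → ℝ) : Prop :=
  (∀ e, 0 ≤ σ e) ∧ ∑ e : E, σ e = 1

/-- Marginal probability `ρ_σ(v)` that a sensor is placed at node `v`. -/
noncomputable def marginal {V : Type*} [Fintype V] [DecidableEq V]
    (σ : Finset V → ℝ) (v : V) : ℝ :=
  ∑ S : Finset V, if v ∈ S then σ S else 0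

/-- Theorem 2: With `V*` a minimum set cover (`n* = |V*|`), `E*` a
maximum set packing (`m* = |E*|`), and `b₁ < n*`, any strategy profile `(σ₁^ε, σ₂^ε)`
satisfying (7)–(8) is an ε-Nash equilibrium with
`ε = b₁ w_min (n* − max{b₁, m*})/(n* max{b₁, m*}) + Δ_w (n* − b₁)/n*`; furthermore
`L(σ₁^ε, σ₂) ≤ w_max (n* − b₁)/n*` for every mixed attack strategy `σ₂`. -/
theorem stmt15 {V E : Type*} [Fintype V] [DecidableEq V] [Fintype E] [DecidableEq E]
    [Nonempty E]
    (M : V → Finset E) (hMne : ∀ v, (M v).Nonempty)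
    (hcov : ∀ e : E, ∃ v, e ∈ M v)
    (w : E → ℝ) (hw : ∀ e, 0 < w e ∧ w e ≤ 1)
    (b1 : ℕ)
    -- V* is a minimum set cover of cardinality n*, and b₁ < n*:
    (Vstar : Finset V) (hVcover : Vstar.biUnion M = Finset.univ)
    (hVmin : ∀ S : Finset V, S.biUnion M = Finset.univ → Vstar.card ≤ S.card)
    (nstar : ℕ) (hn : nstar = Vstar.card) (hbn : b1 < nstar)
    -- E* is a maximum set packing of cardinality m*:
    (Estar : Finset E) (hEpack : ∀ v : V, (M v ∩ Estar).card ≤ 1)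
    (hEmax : ∀ F : Finset E, (∀ v : V, (M v ∩ F).card ≤ 1) → F.card ≤ Estar.card)
    (mstar : ℕ) (hm : mstar = Estar.card)
    -- extreme criticality levels:
    (wmin wmax Δw : ℝ)
    (hwmin : wmin = Finset.univ.inf' Finset.univ_nonempty w)
    (hwmax : wmax = Finset.univ.sup' Finset.univ_nonempty w)
    (hΔ : Δw = wmax - wmin)
    -- the strategy profile (σ₁^ε, σ₂^ε) satisfying (7)–(8):
    (σ1 : Finset V → ℝ) (hσ1 : IsMixed1 b1 σ1)
    (hmarg : ∀ v : V, marginal σ1 v = if v ∈ Vstar then (b1 : ℝ) / nstar else 0)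
    (σ2 : E → ℝ) (hσ2 : IsMixed2 σ2)
    (hσ2val : ∀ e : E, σ2 e = if e ∈ Estar then 1 / (mstar : ℝ) else 0)
    (ε : ℝ)
    (hε : ε = (b1 : ℝ) * wmin *
        (((nstar : ℝ) - ((max b1 mstar : ℕ) : ℝ)) / ((nstar : ℝ) * ((max b1 mstar : ℕ) : ℝ)))
      + Δw * (((nstar : ℝ) - b1) / nstar)) :
    -- (σ₁^ε, σ₂^ε) is an ε-Nash equilibrium:
    (∀ τ1 : Finset V → ℝ, ∀ τ2 : E → ℝ, IsMixed1 b1 τ1 → IsMixed2 τ2 →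
      eLoss M w σ1 τ2 - ε ≤ eLoss M w σ1 σ2 ∧
      eLoss M w σ1 σ2 ≤ eLoss M w τ1 σ2 + ε) ∧
    -- worst-case loss bound (9):
    (∀ τ2 : E → ℝ, IsMixed2 τ2 →
      eLoss M w σ1 τ2 ≤ wmax * (((nstar : ℝ) - b1) / nstar)) := by
  obtain ⟨hσ1nn, hσ1sum, hσ1card⟩ := hσ1
  obtain ⟨hσ2nn, hσ2sum⟩ := hσ2
  obtain ⟨e0⟩ := ‹Nonempty E›
  -- basic numeric facts
  have hm1 : 1 ≤ mstar := by
    rw [hm]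
    have h := hEmax {e0} (fun v => by
      have : (M v ∩ {e0}).card ≤ ({e0} : Finset E).card :=
        Finset.card_le_card Finset.inter_subset_right
      simpa using this)
    simpa using h
  have hn1 : 1 ≤ nstar := by omega
  have hnpos : (0:ℝ) < (nstar : ℝ) := by exact_mod_cast hn1
  have hmpos : (0:ℝ) < (mstar : ℝ) := by exact_mod_cast hm1
  have hwmin_le : ∀ e, wmin ≤ w e := fun e => hwmin ▸ Finset.inf'_le _ (Finset.mem_univ e)
  have hle_wmax : ∀ e, w e ≤ wmax := fun e => hwmax ▸ Finset.le_sup' _ (Finset.mem_univ e)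
  have hwminpos : 0 < wmin := by
    obtain ⟨e, -, he⟩ := Finset.exists_mem_eq_inf' (Finset.univ_nonempty (α := E)) w
    rw [hwmin, he]; exact (hw e).1
  have hwmaxpos : 0 < wmax := lt_of_lt_of_le hwminpos ((hwmin_le e0).trans (hle_wmax e0))
  have hDnn : (0:ℝ) ≤ ((nstar : ℝ) - b1) / nstar := by
    apply div_nonneg _ hnpos.le
    have : (b1:ℝ) < nstar := by exact_mod_cast hbn
    linarith
  -- probability that e is uncovered
  set Q : (Finset V → ℝ) → E → ℝ :=
    fun σ e => ∑ S : Finset V, σ S * (if e ∈ S.biUnion M then 0 else 1) with hQdef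
  have eLoss_eq : ∀ (σ : Finset V → ℝ) (τ : E → ℝ),
      eLoss M w σ τ = ∑ e : E, τ e * w e * Q σ e := by
    intro σ τ
    rw [eLoss, Finset.sum_comm]
    refine Finset.sum_congr rfl fun e _ => ?_
    rw [hQdef]
    rw [Finset.mul_sum]
    refine Finset.sum_congr rfl fun S _ => ?_
    split_ifs <;> ring
  have Q_nonneg : ∀ (σ : Finset V → ℝ), (∀ S, 0 ≤ σ S) → ∀ e, 0 ≤ Q σ e := by
    intro σ hnn e
    refine Finset.sum_nonneg fun S _ => ?_
    have := hnn S
    split_ifs <;> simp [this]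
  -- upper bound on uncovering probability under σ1
  have Qσ1_le : ∀ e, Q σ1 e ≤ ((nstar : ℝ) - b1) / nstar := by
    intro e
    have he : e ∈ Vstar.biUnion M := hVcover ▸ Finset.mem_univ e
    obtain ⟨v, hvV, hve⟩ := Finset.mem_biUnion.mp he
    have h1 : Q σ1 e ≤ ∑ S : Finset V, σ1 S * (if v ∈ S then 0 else 1) := by
      refine Finset.sum_le_sum fun S _ => ?_
      by_cases hvS : v ∈ S
      · have hcovd : e ∈ S.biUnion M := Finset.mem_biUnion.mpr ⟨v, hvS, hve⟩
        simp [hcovd, hvS]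
      · rw [if_neg hvS, mul_one]
        split_ifs with h
        · simpa using hσ1nn S
        · exact le_of_eq (mul_one _)
    have h2 : ∑ S : Finset V, σ1 S * (if v ∈ S then 0 else 1) = 1 - marginal σ1 v := by
      have hterm : ∀ S ∈ (Finset.univ : Finset (Finset V)),
          σ1 S * (if v ∈ S then (0:ℝ) else 1) = σ1 S - (if v ∈ S then σ1 S else 0) :=
        fun S _ => by split_ifs <;> ring
      rw [Finset.sum_congr rfl hterm, Finset.sum_sub_distrib, hσ1sum, marginal]
    rw [h2, hmarg v, if_pos hvV] at h1
    have : 1 - (b1:ℝ)/nstar = ((nstar:ℝ) - b1)/nstar := by field_simp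
    linarith [h1, this.ge]
  -- packing lower bound on total uncovering probability
  have sumQ_ge : ∀ τ : Finset V → ℝ, IsMixed1 b1 τ →
      ((mstar : ℝ) - b1) ≤ ∑ e ∈ Estar, Q τ e := by
    rintro τ ⟨hnn, hsum, hcard⟩
    have hswap : ∑ e ∈ Estar, Q τ e
        = ∑ S : Finset V, τ S * ∑ e ∈ Estar, (if e ∈ S.biUnion M then (0:ℝ) else 1) := by
      rw [hQdef, Finset.sum_comm]
      exact Finset.sum_congr rfl fun S _ => by rw [Finset.mul_sum]
    have inner : ∀ S : Finset V, S.card ≤ b1 →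
        ((mstar : ℝ) - b1) ≤ ∑ e ∈ Estar, (if e ∈ S.biUnion M then (0:ℝ) else 1) := by
      intro S hS
      have hfilcard : (Estar.filter (fun e => e ∈ S.biUnion M)).card ≤ b1 := by
        have hsub : Estar.filter (fun e => e ∈ S.biUnion M)
            ⊆ S.biUnion (fun v => M v ∩ Estar) := by
          intro e hemem
          obtain ⟨heE, heC⟩ := Finset.mem_filter.mp hemem
          obtain ⟨v, hvS, hev⟩ := Finset.mem_biUnion.mp heC
          exact Finset.mem_biUnion.mpr ⟨v, hvS, Finset.mem_inter.mpr ⟨hev, heE⟩⟩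
        calc (Estar.filter (fun e => e ∈ S.biUnion M)).card
            ≤ (S.biUnion (fun v => M v ∩ Estar)).card := Finset.card_le_card hsub
          _ ≤ ∑ v ∈ S, (M v ∩ Estar).card := Finset.card_biUnion_le
          _ ≤ ∑ v ∈ S, 1 := Finset.sum_le_sum fun v _ => hEpack v
          _ = S.card := by simp
          _ ≤ b1 := hS
      have hsum_eq : ∑ e ∈ Estar, (if e ∈ S.biUnion M then (0:ℝ) else 1)
          = (Estar.card : ℝ) - ((Estar.filter (fun e => e ∈ S.biUnion M)).card : ℝ) := by
        have hb : ∑ e ∈ Estar, (if e ∈ S.biUnion M then (1:ℝ) else 0)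
            = ((Estar.filter (fun e => e ∈ S.biUnion M)).card : ℝ) := by
          simp [Finset.sum_boole]
        have hterm : ∀ e ∈ Estar, (if e ∈ S.biUnion M then (0:ℝ) else 1)
            = 1 - (if e ∈ S.biUnion M then (1:ℝ) else 0) := fun e _ => by
          split_ifs <;> ring
        rw [Finset.sum_congr rfl hterm, Finset.sum_sub_distrib, hb]
        simp
      rw [hsum_eq, hm]
      have : ((Estar.filter (fun e => e ∈ S.biUnion M)).card : ℝ) ≤ (b1 : ℝ) := by
        exact_mod_cast hfilcard
      linarith
    rw [hswap]
    calc ((mstar : ℝ) - b1) = ∑ S : Finset V, τ S * ((mstar : ℝ) - b1) := by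
          rw [← Finset.sum_mul, hsum, one_mul]
      _ ≤ ∑ S : Finset V, τ S * ∑ e ∈ Estar, (if e ∈ S.biUnion M then (0:ℝ) else 1) := by
          refine Finset.sum_le_sum fun S _ => ?_
          by_cases h : τ S = 0
          · simp [h]
          · exact mul_le_mul_of_nonneg_left (inner S (hcard S h)) (hnn S)
  -- expression of loss against σ2
  have eLoss_σ2 : ∀ σ : Finset V → ℝ,
      eLoss M w σ σ2 = ∑ e ∈ Estar, (1 / (mstar : ℝ)) * (w e * Q σ e) := by
    intro σ
    rw [eLoss_eq]
    rw [← Finset.sum_subset (Finset.subset_univ Estar) (fun e _ he => by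
      rw [hσ2val, if_neg he]; ring)]
    exact Finset.sum_congr rfl fun e he => by rw [hσ2val, if_pos he]; ring
  -- lower bound on loss against σ2 for any budget strategy
  have eLoss_lb : ∀ τ : Finset V → ℝ, IsMixed1 b1 τ →
      wmin * (((mstar : ℝ) - b1) / mstar) ≤ eLoss M w τ σ2 := by
    intro τ hτ
    rw [eLoss_σ2]
    have h1 : ∑ e ∈ Estar, (1 / (mstar : ℝ)) * (wmin * Q τ e)
        ≤ ∑ e ∈ Estar, (1 / (mstar : ℝ)) * (w e * Q τ e) := by
      refine Finset.sum_le_sum fun e _ => ?_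
      have hQ0 := Q_nonneg τ hτ.1 e
      have hle := hwmin_le e
      have : wmin * Q τ e ≤ w e * Q τ e := mul_le_mul_of_nonneg_right hle hQ0
      have hmnn : (0:ℝ) ≤ 1 / (mstar : ℝ) := by positivity
      exact mul_le_mul_of_nonneg_left this hmnn
    have h2 : ∑ e ∈ Estar, (1 / (mstar : ℝ)) * (wmin * Q τ e)
        = (wmin * (1 / (mstar : ℝ))) * ∑ e ∈ Estar, Q τ e := by
      rw [Finset.mul_sum]
      exact Finset.sum_congr rfl fun e _ => by ring
    have h3 : (wmin * (1 / (mstar : ℝ))) * ((mstar : ℝ) - b1)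
        ≤ (wmin * (1 / (mstar : ℝ))) * ∑ e ∈ Estar, Q τ e := by
      refine mul_le_mul_of_nonneg_left (sumQ_ge τ hτ) ?_
      positivity
    have h4 : wmin * (((mstar : ℝ) - b1) / mstar)
        = (wmin * (1 / (mstar : ℝ))) * ((mstar : ℝ) - b1) := by ring
    linarith
  -- nonnegativity of loss against σ2
  have eLoss_nn : ∀ τ : Finset V → ℝ, (∀ S, 0 ≤ τ S) → 0 ≤ eLoss M w τ σ2 := by
    intro τ hnn
    rw [eLoss_eq]
    refine Finset.sum_nonneg fun e _ => ?_
    have h1 : 0 ≤ σ2 e := hσ2nn e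
    have h2 : 0 ≤ w e := (hw e).1.le
    have h3 := Q_nonneg τ hnn e
    positivity
  -- upper bound (part 3)
  have eLoss_ub : ∀ τ2 : E → ℝ, IsMixed2 τ2 →
      eLoss M w σ1 τ2 ≤ wmax * (((nstar : ℝ) - b1) / nstar) := by
    rintro τ2 ⟨hnn, hsum⟩
    rw [eLoss_eq]
    calc ∑ e : E, τ2 e * w e * Q σ1 e
        ≤ ∑ e : E, τ2 e * (wmax * (((nstar : ℝ) - b1) / nstar)) := by
          refine Finset.sum_le_sum fun e _ => ?_
          have hQ0 := Q_nonneg σ1 hσ1nn e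
          have hQu := Qσ1_le e
          have hwe := (hw e).1
          have hwm := hle_wmax e
          have h0 := hnn e
          have s1 : w e * Q σ1 e ≤ wmax * (((nstar : ℝ) - b1) / nstar) :=
            mul_le_mul hwm hQu hQ0 hwmaxpos.le
          rw [mul_assoc]
          exact mul_le_mul_of_nonneg_left s1 h0
      _ = wmax * (((nstar : ℝ) - b1) / nstar) := by
          rw [← Finset.sum_mul, hsum, one_mul]
  -- the key arithmetic inequality
  have key : wmax * (((nstar : ℝ) - b1) / nstar)
      ≤ max 0 (wmin * (((mstar : ℝ) - b1) / mstar)) + ε := by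
    rcases le_or_gt b1 mstar with hbm | hbm
    · have hmaxn : max b1 mstar = mstar := max_eq_right hbm
      have hLBnn : 0 ≤ wmin * (((mstar : ℝ) - b1) / mstar) := by
        apply mul_nonneg hwminpos.le
        apply div_nonneg _ hmpos.le
        have : (b1:ℝ) ≤ mstar := by exact_mod_cast hbm
        linarith
      rw [max_eq_right hLBnn]
      have heq : wmax * (((nstar : ℝ) - b1) / nstar)
          = wmin * (((mstar : ℝ) - b1) / mstar) + ε := by
        rw [hε, hΔ, hmaxn]
        field_simp
        ring
      linarith
    · have hmaxn : max b1 mstar = b1 := max_eq_left hbm.le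
      have hb1pos : (0:ℝ) < (b1 : ℝ) := by
        have : 1 ≤ b1 := by omega
        exact_mod_cast this
      have heq : ε = wmax * (((nstar : ℝ) - b1) / nstar) := by
        rw [hε, hΔ, hmaxn]
        field_simp
        ring
      have h0 : (0:ℝ) ≤ max 0 (wmin * (((mstar : ℝ) - b1) / mstar)) := le_max_left _ _
      linarith
  have hmix1 : IsMixed1 b1 σ1 := ⟨hσ1nn, hσ1sum, hσ1card⟩
  have hmix2 : IsMixed2 σ2 := ⟨hσ2nn, hσ2sum⟩
  have hσ1σ2_ge : max 0 (wmin * (((mstar : ℝ) - b1) / mstar)) ≤ eLoss M w σ1 σ2 :=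
    max_le (eLoss_nn σ1 hσ1nn) (eLoss_lb σ1 hmix1)
  refine ⟨fun τ1 τ2 hτ1 hτ2 => ⟨?_, ?_⟩, fun τ2 hτ2 => eLoss_ub τ2 hτ2⟩
  · have := eLoss_ub τ2 hτ2
    linarith
  · have hub := eLoss_ub σ2 hmix2
    have hge : max 0 (wmin * (((mstar : ℝ) - b1) / mstar)) ≤ eLoss M w τ1 σ2 :=
      max_le (eLoss_nn τ1 hτ1.1) (eLoss_lb τ1 hτ1)
    linarith

end Stmt15
end

section
/- Exact equilibrium for homogeneous criticality: suppose w_e = w for all e ∈ ℰ (so Δ_w = 0), let V* be a minimum set cover with n* = |V*|, let E* be a maximum set packing with m* = |E*|, assume b_1 < n* and n* = m*. Then any strategy profile (σ_1^ε, σ_2^ε) satisfying ρ_{σ_1^ε}(v) = b_1/n* for v ∈ V*, ρ_{σ_1^ε}(v) = 0 for v ∉ V*, and σ_2^ε(e) = 1/m* for e ∈ E*, σ_2^ε(e) = 0 otherwise, is an exact Nash equilibrium of the game. -/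
open Finset

namespace Stmt16

/-- Expected loss `L(σ₁, σ₂)` of the monitoring game. -/
noncomputable def eLoss {V E : Type*} [Fintype V] [Fintype E] [DecidableEq E]
    (M : V → Finset E) (w : E → ℝ) (σ1 : Finset V → ℝ) (σ2 : E → ℝ) : ℝ :=
  ∑ S : Finset V, ∑ e : E, σ1 S * σ2 e * (if e ∈ S.biUnion M then 0 else w e)

/-- `σ` is a mixed strategy of Player 1 with budget `b₁`. -/
def IsMixed1 {V : Type*} [Fintype V] (b1 : ℕ) (σ : Finset V → ℝ) : Prop :=
  (∀ S, 0 ≤ σ S) ∧ (∑ S : Finset V, σ S = 1) ∧ ∀ S : Finset V, σ S ≠ 0 → S.card ≤ b1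

/-- `σ` is a mixed strategy of Player 2. -/
def IsMixed2 {E : Type*} [Fintype E] (σ : E → ℝ) : Prop :=
  (∀ e, 0 ≤ σ e) ∧ ∑ e : E, σ e = 1

/-- Marginal probability `ρ_σ(v)` that a sensor is placed at node `v`. -/
noncomputable def marginal {V : Type*} [Fintype V] [DecidableEq V]
    (σ : Finset V → ℝ) (v : V) : ℝ :=
  ∑ S : Finset V, if v ∈ S then σ S else 0

/-- Probability that component `e` is NOT covered under `σ1`. -/
noncomputable def qe {V E : Type*} [Fintype V] [DecidableEq E]
    (M : V → Finset E) (σ1 : Finset V → ℝ) (e : E) : ℝ :=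
  ∑ S : Finset V, (if e ∈ S.biUnion M then 0 else σ1 S)

/-- Probability that component `e` IS covered under `σ1`. -/
noncomputable def pe {V E : Type*} [Fintype V] [DecidableEq E]
    (M : V → Finset E) (σ1 : Finset V → ℝ) (e : E) : ℝ :=
  ∑ S : Finset V, (if e ∈ S.biUnion M then σ1 S else 0)

/-- Exact equilibrium for homogeneous criticality.  If all components
have the same criticality `c` (so `Δ_w = 0`), `V*` is a minimum set cover with
`n* = |V*|`, `E*` is a maximum set packing with `m* = |E*|`, `b₁ < n*` and `n* = m*`,
then any strategy profile satisfying (7)–(8) is an exact Nash equilibrium. -/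
theorem stmt16 {V E : Type*} [Fintype V] [DecidableEq V] [Fintype E] [DecidableEq E]
    [Nonempty E]
    (M : V → Finset E) (hMne : ∀ v, (M v).Nonempty)
    (hcov : ∀ e : E, ∃ v, e ∈ M v)
    (w : E → ℝ) (hw : ∀ e, 0 < w e ∧ w e ≤ 1)
    -- homogeneous criticality levels:
    (c : ℝ) (hc : ∀ e : E, w e = c)
    (b1 : ℕ)
    -- V* is a minimum set cover of cardinality n*, and b₁ < n*:
    (Vstar : Finset V) (hVcover : Vstar.biUnion M = Finset.univ)
    (hVmin : ∀ S : Finset V, S.biUnion M = Finset.univ → Vstar.card ≤ S.card)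
    (nstar : ℕ) (hn : nstar = Vstar.card) (hbn : b1 < nstar)
    -- E* is a maximum set packing of cardinality m*, and n* = m*:
    (Estar : Finset E) (hEpack : ∀ v : V, (M v ∩ Estar).card ≤ 1)
    (hEmax : ∀ F : Finset E, (∀ v : V, (M v ∩ F).card ≤ 1) → F.card ≤ Estar.card)
    (mstar : ℕ) (hm : mstar = Estar.card) (hnm : nstar = mstar)
    -- the strategy profile (σ₁^ε, σ₂^ε) satisfying (7)–(8):
    (σ1 : Finset V → ℝ) (hσ1 : IsMixed1 b1 σ1)
    (hmarg : ∀ v : V, marginal σ1 v = if v ∈ Vstar then (b1 : ℝ) / nstar else 0)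
    (σ2 : E → ℝ) (hσ2 : IsMixed2 σ2)
    (hσ2val : ∀ e : E, σ2 e = if e ∈ Estar then 1 / (mstar : ℝ) else 0) :
    -- (σ₁^ε, σ₂^ε) is an exact Nash equilibrium:
    (∀ τ2 : E → ℝ, IsMixed2 τ2 → eLoss M w σ1 τ2 ≤ eLoss M w σ1 σ2) ∧
    (∀ τ1 : Finset V → ℝ, IsMixed1 b1 τ1 → eLoss M w σ1 σ2 ≤ eLoss M w τ1 σ2) := by
  obtain ⟨hσ1nn, hσ1sum, hσ1card⟩ := hσ1
  obtain ⟨hσ2nn, hσ2sum⟩ := hσ2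
  have e0 : E := Classical.arbitrary E
  have hcpos : 0 < c := by rw [← hc e0]; exact (hw e0).1
  have hn0 : 0 < nstar := lt_of_le_of_lt (Nat.zero_le _) hbn
  have hm0 : 0 < mstar := hnm ▸ hn0
  have hnR : (0:ℝ) < nstar := by exact_mod_cast hn0
  have hmR : (0:ℝ) < mstar := by exact_mod_cast hm0
  set α : ℝ := (b1:ℝ) / nstar with hα
  -- p e + q e = 1
  have hpq : ∀ e : E, pe M σ1 e + qe M σ1 e = 1 := by
    intro e
    unfold pe qe
    rw [← Finset.sum_add_distrib]
    rw [Finset.sum_congr rfl (fun S _ => by split_ifs <;> ring :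
      ∀ S ∈ (univ : Finset (Finset V)),
        ((if e ∈ S.biUnion M then σ1 S else 0) + (if e ∈ S.biUnion M then 0 else σ1 S)) = σ1 S)]
    exact hσ1sum
  -- Lemma A : α ≤ p e for every e
  have hpa : ∀ e : E, α ≤ pe M σ1 e := by
    intro e
    have he : e ∈ Vstar.biUnion M := hVcover ▸ Finset.mem_univ e
    obtain ⟨v0, hv0V, hv0⟩ := Finset.mem_biUnion.mp he
    have hmv0 : marginal σ1 v0 = α := by rw [hmarg v0, if_pos hv0V]
    have hle : marginal σ1 v0 ≤ pe M σ1 e := by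
      unfold marginal pe
      refine Finset.sum_le_sum fun S _ => ?_
      by_cases hS : v0 ∈ S
      · rw [if_pos hS, if_pos (Finset.mem_biUnion.mpr ⟨v0, hS, hv0⟩)]
      · rw [if_neg hS]
        split_ifs
        · exact hσ1nn S
        · exact le_refl 0
    linarith
  -- Lemma B : for e ∈ Estar, exactly one v ∈ Vstar covers e
  have hdc : ∑ e ∈ Estar, (Vstar.filter (fun v => e ∈ M v)).card
      = ∑ v ∈ Vstar, (M v ∩ Estar).card := by
    simp_rw [Finset.card_filter]
    rw [Finset.sum_comm]
    refine Finset.sum_congr rfl fun v _ => ?_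
    rw [← Finset.card_filter]
    congr 1
    ext e
    simp [Finset.mem_filter, Finset.mem_inter, and_comm]
  have hsum_le : ∑ e ∈ Estar, (Vstar.filter (fun v => e ∈ M v)).card ≤ Estar.card := by
    rw [hdc]
    calc ∑ v ∈ Vstar, (M v ∩ Estar).card ≤ ∑ v ∈ Vstar, 1 :=
          Finset.sum_le_sum fun v _ => hEpack v
      _ = Vstar.card := by simp
      _ = Estar.card := by omega
  have hone : ∀ e ∈ Estar, 1 ≤ (Vstar.filter (fun v => e ∈ M v)).card := by
    intro e _
    have he : e ∈ Vstar.biUnion M := hVcover ▸ Finset.mem_univ e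
    obtain ⟨v, hv, hev⟩ := Finset.mem_biUnion.mp he
    exact Finset.card_pos.mpr ⟨v, Finset.mem_filter.mpr ⟨hv, hev⟩⟩
  have hB : ∀ e ∈ Estar, (Vstar.filter (fun v => e ∈ M v)).card = 1 := by
    have h1 : ∑ e ∈ Estar, 1 ≤ ∑ e ∈ Estar, (Vstar.filter (fun v => e ∈ M v)).card :=
      Finset.sum_le_sum hone
    have h2 : ∑ e ∈ Estar, (Vstar.filter (fun v => e ∈ M v)).card = ∑ e ∈ Estar, 1 := by
      have h3 : ∑ e ∈ Estar, (1:ℕ) = Estar.card := by simp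
      omega
    intro e he
    exact ((Finset.sum_eq_sum_iff_of_le hone).mp h2.symm e he).symm
  -- Lemma C : p e ≤ α for e ∈ Estar
  have hpc : ∀ e ∈ Estar, pe M σ1 e ≤ α := by
    intro e he
    have hstep : pe M σ1 e ≤ ∑ v ∈ univ.filter (fun v => e ∈ M v), marginal σ1 v := by
      unfold pe marginal
      rw [Finset.sum_comm]
      refine Finset.sum_le_sum fun S _ => ?_
      by_cases hcv : e ∈ S.biUnion M
      · rw [if_pos hcv]
        obtain ⟨v1, hv1S, hv1⟩ := Finset.mem_biUnion.mp hcv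
        have hv1mem : v1 ∈ univ.filter (fun v => e ∈ M v) := by
          simp [Finset.mem_filter, hv1]
        have := Finset.single_le_sum
          (f := fun v => if v ∈ S then σ1 S else 0)
          (fun v _ => by by_cases h : v ∈ S <;> simp [h, hσ1nn S]) hv1mem
        simpa [hv1S] using this
      · rw [if_neg hcv]
        exact Finset.sum_nonneg fun v _ => by by_cases h : v ∈ S <;> simp [h, hσ1nn S]
    have hval : ∑ v ∈ univ.filter (fun v => e ∈ M v), marginal σ1 v = α := by
      rw [Finset.sum_congr rfl (fun v _ => hmarg v)]
      rw [Finset.sum_ite, Finset.sum_const, Finset.sum_const, smul_zero, add_zero]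
      have hfe : (univ.filter (fun v => e ∈ M v)).filter (fun v => v ∈ Vstar)
          = Vstar.filter (fun v => e ∈ M v) := by
        ext v; simp [Finset.mem_filter, and_comm]
      rw [hfe, hB e he, one_smul]
    linarith
  -- q e = 1 - α on Estar, q e ≤ 1 - α everywhere
  have hD : ∀ e ∈ Estar, qe M σ1 e = 1 - α := by
    intro e he
    have := hpq e
    have h1 := hpa e
    have h2 := hpc e he
    linarith
  have hEq : ∀ e : E, qe M σ1 e ≤ 1 - α := by
    intro e
    have := hpq e
    have h1 := hpa e
    linarith
  -- loss formula
  have hF : ∀ τ2 : E → ℝ, eLoss M w σ1 τ2 = ∑ e : E, τ2 e * (c * qe M σ1 e) := by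
    intro τ2
    unfold eLoss qe
    rw [Finset.sum_comm]
    refine Finset.sum_congr rfl fun e _ => ?_
    rw [Finset.mul_sum, Finset.mul_sum]
    refine Finset.sum_congr rfl fun S _ => ?_
    rw [hc e]
    split_ifs <;> ring
  -- equilibrium value
  have hG : eLoss M w σ1 σ2 = c * (1 - α) := by
    rw [hF σ2]
    have hterm : ∀ e : E, σ2 e * (c * qe M σ1 e)
        = if e ∈ Estar then (1 / (mstar:ℝ)) * (c * (1 - α)) else 0 := by
      intro e
      rw [hσ2val e]
      split_ifs with h
      · rw [hD e h]
      · ring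
    rw [Finset.sum_congr rfl (fun e _ => hterm e), Finset.sum_ite_mem, Finset.univ_inter,
      Finset.sum_const, ← hm, nsmul_eq_mul]
    field_simp
  -- packing bound : |Estar ∩ cov S| ≤ |S|
  have hcard : ∀ S : Finset V, (Estar ∩ S.biUnion M).card ≤ S.card := by
    intro S
    calc (Estar ∩ S.biUnion M).card
        ≤ (S.biUnion (fun v => M v ∩ Estar)).card := by
          refine Finset.card_le_card ?_
          intro e he
          obtain ⟨heE, hecov⟩ := Finset.mem_inter.mp he
          obtain ⟨v, hvS, hev⟩ := Finset.mem_biUnion.mp hecov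
          exact Finset.mem_biUnion.mpr ⟨v, hvS, Finset.mem_inter.mpr ⟨hev, heE⟩⟩
      _ ≤ ∑ v ∈ S, (M v ∩ Estar).card := Finset.card_biUnion_le
      _ ≤ ∑ v ∈ S, 1 := Finset.sum_le_sum fun v _ => hEpack v
      _ = S.card := by simp
  constructor
  · -- Player 2 cannot improve
    rintro τ2 ⟨hτnn, hτsum⟩
    rw [hF τ2, hG]
    calc ∑ e : E, τ2 e * (c * qe M σ1 e)
        ≤ ∑ e : E, τ2 e * (c * (1 - α)) := by
          refine Finset.sum_le_sum fun e _ => ?_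
          exact mul_le_mul_of_nonneg_left
            (mul_le_mul_of_nonneg_left (hEq e) hcpos.le) (hτnn e)
      _ = (∑ e : E, τ2 e) * (c * (1 - α)) := by rw [← Finset.sum_mul]
      _ = c * (1 - α) := by rw [hτsum, one_mul]
  · -- Player 1 cannot improve
    rintro τ1 ⟨hτnn, hτsum, hτcard⟩
    rw [hG]
    have hform : eLoss M w τ1 σ2
        = ∑ S : Finset V, τ1 S * (((Estar \ S.biUnion M).card : ℝ) * (c / mstar)) := by
      unfold eLoss
      refine Finset.sum_congr rfl fun S _ => ?_
      have hterm : ∀ e : E, τ1 S * σ2 e * (if e ∈ S.biUnion M then 0 else w e)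
          = τ1 S * (if e ∈ Estar \ S.biUnion M then c / (mstar:ℝ) else 0) := by
        intro e
        rw [hσ2val e, hc e]
        by_cases h1 : e ∈ Estar <;> by_cases h2 : e ∈ S.biUnion M <;>
          simp [Finset.mem_sdiff, h1, h2] <;> ring
      rw [Finset.sum_congr rfl (fun e _ => hterm e), ← Finset.mul_sum,
        Finset.sum_ite_mem, Finset.univ_inter, Finset.sum_const, nsmul_eq_mul]
    rw [hform]
    calc c * (1 - α) = ∑ S : Finset V, τ1 S * (c * (1 - α)) := by
          rw [← Finset.sum_mul, hτsum, one_mul]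
      _ ≤ ∑ S : Finset V, τ1 S * (((Estar \ S.biUnion M).card : ℝ) * (c / mstar)) := by
          refine Finset.sum_le_sum fun S _ => ?_
          rcases eq_or_ne (τ1 S) 0 with h0 | hne
          · simp [h0]
          · refine mul_le_mul_of_nonneg_left ?_ (hτnn S)
            have hSb : S.card ≤ b1 := hτcard S hne
            have hint : (Estar ∩ S.biUnion M).card ≤ b1 := le_trans (hcard S) hSb
            have hsd := Finset.card_inter_add_card_sdiff Estar (S.biUnion M)
            have hx : (mstar:ℝ) - b1 ≤ ((Estar \ S.biUnion M).card : ℝ) := by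
              have h5 : mstar ≤ (Estar \ S.biUnion M).card + b1 := by omega
              have h6 := (Nat.cast_le (α := ℝ)).mpr h5
              push_cast at h6
              linarith
            have hαm : α = (b1:ℝ) / mstar := by rw [hα, hnm]
            have heq : c * (1 - α) = ((mstar:ℝ) - b1) * (c / mstar) := by
              rw [hαm]; field_simp
            rw [heq]
            exact mul_le_mul_of_nonneg_right hx (by positivity)

end Stmt16
end

section
/- Proposition 4: Let Ē ⊆ ℰ be the set of components with criticality w_max = max_e w_e, assume Ē ≠ ℰ, and let w̄_max = max_{e ∈ ℰ∖Ē} w_e and Δ̄_w = w_max − w̄_max. Let V̄* be a minimum set cover of Ē (a smallest node set V with Ē ⊆ E_V) with n̄* = |V̄*|, and Ē* a maximum set packing contained in Ē with m̄* = |Ē*|; assume b_1 ≤ n̄*. If Δ̄_w ≥ w_max b_1/n̄*, then any strategy profile (σ̄_1^ε, σ̄_2^ε) satisfying ρ_{σ̄_1^ε}(v) = b_1/n̄* for v ∈ V̄*, ρ_{σ̄_1^ε}(v) = 0 for v ∉ V̄*, and σ̄_2^ε(e) = 1/m̄* for e ∈ Ē*, σ̄_2^ε(e) = 0 otherwise,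 is an ε̄-Nash equilibrium of the game with ε̄ = b_1 w_max (n̄* − max{b_1, m̄*})/(n̄* max{b_1, m̄*}). Furthermore, for every mixed attack strategy σ_2, L(σ̄_1^ε, σ_2) ≤ w_max (n̄* − b_1)/n̄*. -/
open Finset

namespace Stmt17

/-- Expected loss `L(σ₁, σ₂)` of the monitoring game. -/
noncomputable def eLoss {V E : Type*} [Fintype V] [Fintype E] [DecidableEq E]
    (M : V → Finset E) (w : E → ℝ) (σ1 : Finset V → ℝ) (σ2 : E → ℝ) : ℝ :=
  ∑ S : Finset V, ∑ e : E, σ1 S * σ2 e * (if e ∈ S.biUnion M then 0 else w e)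

/-- `σ` is a mixed strategy of Player 1 with budget `b₁`. -/
def IsMixed1 {V : Type*} [Fintype V] (b1 : ℕ) (σ : Finset V → ℝ) : Prop :=
  (∀ S, 0 ≤ σ S) ∧ (∑ S : Finset V, σ S = 1) ∧ ∀ S : Finset V, σ S ≠ 0 → S.card ≤ b1

/-- `σ` is a mixed strategy of Player 2. -/
def IsMixed2 {E : Type*} [Fintype E] (σ : E → ℝ) : Prop :=
  (∀ e, 0 ≤ σ e) ∧ ∑ e : E, σ e = 1

/-- Marginal probability `ρ_σ(v)` that a sensor is placed at node `v`. -/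
noncomputable def marginal {V : Type*} [Fintype V] [DecidableEq V]
    (σ : Finset V → ℝ) (v : V) : ℝ :=
  ∑ S : Finset V, if v ∈ S then σ S else 0

/-- Proposition 4: Let `Ē` be the set of components of maximal
criticality `w_max`, `Ē ≠ ℰ`, `w̄_max` the largest criticality outside `Ē`, and
`Δ̄_w = w_max − w̄_max`.  Let `V̄*` be a minimum set cover of `Ē` with `n̄* = |V̄*|`,
`Ē*` a maximum set packing contained in `Ē` with `m̄* = |Ē*|`, and `b₁ ≤ n̄*`.
If `Δ̄_w ≥ w_max b₁/n̄*`, then any strategy profile satisfying (11)–(12) is an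
ε̄-Nash equilibrium with `ε̄ = b₁ w_max (n̄* − max{b₁, m̄*})/(n̄* max{b₁, m̄*})`,
and `L(σ̄₁^ε, σ₂) ≤ w_max (n̄* − b₁)/n̄*` for every mixed attack strategy `σ₂`. -/
theorem stmt17 {V E : Type*} [Fintype V] [DecidableEq V] [Fintype E] [DecidableEq E]
    [Nonempty E]
    (M : V → Finset E) (hMne : ∀ v, (M v).Nonempty)
    (hcov : ∀ e : E, ∃ v, e ∈ M v)
    (w : E → ℝ) (hw : ∀ e, 0 < w e ∧ w e ≤ 1)
    (b1 : ℕ)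
    -- w_max and the set Ē of components of maximal criticality, with Ē ≠ ℰ:
    (wmax : ℝ) (hwmax : wmax = Finset.univ.sup' Finset.univ_nonempty w)
    (Ebar : Finset E) (hEbar : Ebar = Finset.univ.filter (fun e => w e = wmax))
    (hEbarne : Ebar ≠ Finset.univ)
    (hcompl : (Finset.univ \ Ebar).Nonempty)
    -- w̄_max and the gap Δ̄_w:
    (wbar : ℝ) (hwbar : wbar = (Finset.univ \ Ebar).sup' hcompl w)
    (Δ : ℝ) (hΔ : Δ = wmax - wbar)
    -- V̄* is a minimum set cover of Ē, of cardinality n̄* ≥ b₁: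
    (Vbar : Finset V) (hVcov : Ebar ⊆ Vbar.biUnion M)
    (hVmin : ∀ S : Finset V, Ebar ⊆ S.biUnion M → Vbar.card ≤ S.card)
    (nbar : ℕ) (hn : nbar = Vbar.card) (hbn : b1 ≤ nbar)
    -- Ē* is a maximum set packing contained in Ē, of cardinality m̄*:
    (Ebarstar : Finset E) (hEsub : Ebarstar ⊆ Ebar)
    (hEpack : ∀ v : V, (M v ∩ Ebarstar).card ≤ 1)
    (hEmax : ∀ F : Finset E, F ⊆ Ebar → (∀ v : V, (M v ∩ F).card ≤ 1) →
      F.card ≤ Ebarstar.card)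
    (mbar : ℕ) (hm : mbar = Ebarstar.card)
    -- the gap condition Δ̄_w ≥ w_max b₁/n̄*:
    (hgap : wmax * (b1 : ℝ) / nbar ≤ Δ)
    -- the strategy profile (σ̄₁^ε, σ̄₂^ε) satisfying (11)–(12):
    (σ1 : Finset V → ℝ) (hσ1 : IsMixed1 b1 σ1)
    (hmarg : ∀ v : V, marginal σ1 v = if v ∈ Vbar then (b1 : ℝ) / nbar else 0)
    (σ2 : E → ℝ) (hσ2 : IsMixed2 σ2)
    (hσ2val : ∀ e : E, σ2 e = if e ∈ Ebarstar then 1 / (mbar : ℝ) else 0)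
    (ε : ℝ)
    (hε : ε = (b1 : ℝ) * wmax *
      (((nbar : ℝ) - ((max b1 mbar : ℕ) : ℝ)) / ((nbar : ℝ) * ((max b1 mbar : ℕ) : ℝ)))) :
    -- (σ̄₁^ε, σ̄₂^ε) is an ε̄-Nash equilibrium:
    (∀ τ1 : Finset V → ℝ, ∀ τ2 : E → ℝ, IsMixed1 b1 τ1 → IsMixed2 τ2 →
      eLoss M w σ1 τ2 - ε ≤ eLoss M w σ1 σ2 ∧
      eLoss M w σ1 σ2 ≤ eLoss M w τ1 σ2 + ε) ∧
    -- worst-case loss bound (13):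
    (∀ τ2 : E → ℝ, IsMixed2 τ2 →
      eLoss M w σ1 τ2 ≤ wmax * (((nbar : ℝ) - b1) / nbar)) := by

  -- Basic positivity facts
  obtain ⟨e0, -, he0⟩ := Finset.exists_mem_eq_sup' (Finset.univ_nonempty (α := E)) w
  have hwe0 : w e0 = wmax := by rw [hwmax, he0]
  have hwmaxpos : 0 < wmax := hwe0 ▸ (hw e0).1
  have hwle : ∀ e, w e ≤ wmax := fun e => by
    rw [hwmax]; exact Finset.le_sup' w (mem_univ e)
  have he0E : e0 ∈ Ebar := by rw [hEbar]; simp [hwe0]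
  obtain ⟨v0, hv0V, -⟩ := mem_biUnion.mp (hVcov he0E)
  have hnpos : 0 < nbar := by rw [hn]; exact card_pos.mpr ⟨v0, hv0V⟩
  have hNpos : (0 : ℝ) < (nbar : ℝ) := by exact_mod_cast hnpos
  have hN0 : ((nbar : ℝ)) ≠ 0 := ne_of_gt hNpos
  have hm1 : 1 ≤ mbar := by
    rw [hm]
    have h := hEmax {e0} (by simp [he0E]) (fun v => by
      calc (M v ∩ {e0}).card ≤ ({e0} : Finset E).card :=
            card_le_card inter_subset_right
        _ = 1 := card_singleton e0)
    simpa using h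
  have hMpos : (0 : ℝ) < (mbar : ℝ) := by exact_mod_cast hm1
  have hM0 : ((mbar : ℝ)) ≠ 0 := ne_of_gt hMpos
  have hwEbar : ∀ e ∈ Ebar, w e = wmax := fun e he => by
    rw [hEbar] at he; exact (mem_filter.mp he).2
  have hBle : (b1 : ℝ) ≤ (nbar : ℝ) := by exact_mod_cast hbn
  set bound : ℝ := wmax * (((nbar : ℝ) - b1) / nbar) with hbound
  have hboundnn : 0 ≤ bound := by
    apply mul_nonneg hwmaxpos.le
    apply div_nonneg (by linarith) hNpos.le
  have hwbarbd : wbar ≤ bound := by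
    have h1 : wbar ≤ wmax - wmax * (b1 : ℝ) / nbar := by
      have := hgap; rw [hΔ] at this; linarith
    have h2 : wmax - wmax * (b1 : ℝ) / nbar = bound := by
      rw [hbound]; field_simp
    linarith
  -- Upper bound: for any mixed attack, L(σ1, τ2) ≤ bound
  have UB : ∀ τ2 : E → ℝ, IsMixed2 τ2 → eLoss M w σ1 τ2 ≤ bound := by
    intro τ2 hτ2
    obtain ⟨hτnn, hτsum⟩ := hτ2
    have hb : ∀ e : E,
        (∑ S : Finset V, σ1 S * (if e ∈ S.biUnion M then 0 else w e)) ≤ bound := by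
      intro e
      by_cases he : e ∈ Ebar
      · obtain ⟨v, hvV, hev⟩ := mem_biUnion.mp (hVcov he)
        calc (∑ S : Finset V, σ1 S * (if e ∈ S.biUnion M then 0 else w e))
            ≤ ∑ S : Finset V, (σ1 S - if v ∈ S then σ1 S else 0) * wmax := by
              apply Finset.sum_le_sum
              intro S _
              by_cases hvS : v ∈ S
              · have hmem : e ∈ S.biUnion M := mem_biUnion.mpr ⟨v, hvS, hev⟩
                simp [hmem, hvS]
              · rw [if_neg hvS, sub_zero]
                by_cases hmem : e ∈ S.biUnion M
                · rw [if_pos hmem, mul_zero]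
                  exact mul_nonneg (hσ1.1 S) hwmaxpos.le
                · rw [if_neg hmem]
                  exact mul_le_mul_of_nonneg_left (hwle e) (hσ1.1 S)
          _ = bound := by
              rw [← Finset.sum_mul, Finset.sum_sub_distrib, hσ1.2.1]
              rw [show (∑ S : Finset V, if v ∈ S then σ1 S else 0) = marginal σ1 v from rfl]
              rw [hmarg v, if_pos hvV, hbound]
              field_simp
      · calc (∑ S : Finset V, σ1 S * (if e ∈ S.biUnion M then 0 else w e))
            ≤ ∑ S : Finset V, σ1 S * bound := by
              apply Finset.sum_le_sum
              intro S _
              apply mul_le_mul_of_nonneg_left _ (hσ1.1 S)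
              by_cases hmem : e ∈ S.biUnion M
              · rw [if_pos hmem]; exact hboundnn
              · rw [if_neg hmem]
                have : w e ≤ wbar := by
                  rw [hwbar]
                  exact Finset.le_sup' w (mem_sdiff.mpr ⟨mem_univ e, he⟩)
                linarith
          _ = bound := by rw [← Finset.sum_mul, hσ1.2.1, one_mul]
    calc eLoss M w σ1 τ2
        = ∑ e : E, ∑ S : Finset V, σ1 S * τ2 e * (if e ∈ S.biUnion M then 0 else w e) := by
          rw [eLoss, Finset.sum_comm]
      _ ≤ ∑ e : E, τ2 e * bound := by
          apply Finset.sum_le_sum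
          intro e _
          have heq : (∑ S : Finset V, σ1 S * τ2 e * (if e ∈ S.biUnion M then 0 else w e))
              = τ2 e * ∑ S : Finset V, σ1 S * (if e ∈ S.biUnion M then 0 else w e) := by
            rw [Finset.mul_sum]
            exact Finset.sum_congr rfl fun S _ => by ring
          rw [heq]
          exact mul_le_mul_of_nonneg_left (hb e) (hτnn e)
      _ = bound := by rw [← Finset.sum_mul, hτsum, one_mul]
  -- Lower bound: for any mixed defense with budget b1, lb ≤ L(τ1, σ2)
  set lb : ℝ := wmax * (((mbar : ℝ) - ((min b1 mbar : ℕ) : ℝ)) / mbar) with hlb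
  have LB : ∀ τ1 : Finset V → ℝ, IsMixed1 b1 τ1 → lb ≤ eLoss M w τ1 σ2 := by
    intro τ1 hτ1
    obtain ⟨hnn, hsum, hcd⟩ := hτ1
    have hbS : ∀ S : Finset V, S.card ≤ b1 →
        lb ≤ ∑ e : E, σ2 e * (if e ∈ S.biUnion M then 0 else w e) := by
      intro S hS
      have hcT : (Ebarstar ∩ S.biUnion M).card ≤ min b1 mbar := by
        refine le_min ?_ ?_
        · calc (Ebarstar ∩ S.biUnion M).card
              = (S.biUnion M ∩ Ebarstar).card := by rw [inter_comm]
            _ = (S.biUnion fun v => M v ∩ Ebarstar).card := by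
                rw [Finset.biUnion_inter]
            _ ≤ ∑ v ∈ S, (M v ∩ Ebarstar).card := Finset.card_biUnion_le
            _ ≤ ∑ _v ∈ S, 1 := Finset.sum_le_sum fun v _ => hEpack v
            _ = S.card := by simp
            _ ≤ b1 := hS
        · rw [hm]; exact card_le_card inter_subset_left
      have hkey : (∑ e : E, σ2 e * (if e ∈ S.biUnion M then 0 else w e))
          = (mbar : ℝ) * (1 / mbar * wmax)
            - ((Ebarstar ∩ S.biUnion M).card : ℝ) * (1 / mbar * wmax) := by
        calc (∑ e : E, σ2 e * (if e ∈ S.biUnion M then 0 else w e))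
            = ∑ e : E, (if e ∈ Ebarstar then
                (1 / (mbar : ℝ)) * (if e ∈ S.biUnion M then 0 else w e) else 0) := by
              refine Finset.sum_congr rfl fun e _ => ?_
              rw [hσ2val e]
              by_cases he : e ∈ Ebarstar <;> simp [he]
          _ = ∑ e ∈ Ebarstar, (1 / (mbar : ℝ)) * (if e ∈ S.biUnion M then 0 else w e) := by
              rw [Finset.sum_ite_mem, univ_inter]
          _ = ∑ e ∈ Ebarstar,
                ((1 / (mbar : ℝ) * wmax) - (if e ∈ S.biUnion M then 1 / (mbar : ℝ) * wmax else 0)) := by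
              refine Finset.sum_congr rfl fun e he => ?_
              have hwE : w e = wmax := hwEbar e (hEsub he)
              by_cases hmem : e ∈ S.biUnion M <;> simp [hmem, hwE] <;> ring
          _ = (mbar : ℝ) * (1 / mbar * wmax)
              - ((Ebarstar ∩ S.biUnion M).card : ℝ) * (1 / mbar * wmax) := by
              rw [Finset.sum_sub_distrib, Finset.sum_const, Finset.sum_ite_mem,
                Finset.sum_const, hm]
              push_cast
              ring
      rw [hkey]
      have hfac : (0 : ℝ) ≤ 1 / mbar * wmax := by positivity
      have hc : ((Ebarstar ∩ S.biUnion M).card : ℝ) ≤ ((min b1 mbar : ℕ) : ℝ) := by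
        exact_mod_cast hcT
      have h1 : lb = (mbar : ℝ) * (1 / mbar * wmax) - ((min b1 mbar : ℕ) : ℝ) * (1 / mbar * wmax) := by
        rw [hlb]; field_simp
      rw [h1]
      have := mul_le_mul_of_nonneg_right hc hfac
      linarith
    calc lb = ∑ S : Finset V, τ1 S * lb := by rw [← Finset.sum_mul, hsum, one_mul]
      _ ≤ ∑ S : Finset V, τ1 S * ∑ e : E, σ2 e * (if e ∈ S.biUnion M then 0 else w e) := by
          apply Finset.sum_le_sum
          intro S _
          by_cases hz : τ1 S = 0
          · simp [hz]
          · exact mul_le_mul_of_nonneg_left (hbS S (hcd S hz)) (hnn S)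
      _ = eLoss M w τ1 σ2 := by
          rw [eLoss]
          refine Finset.sum_congr rfl fun S _ => ?_
          rw [Finset.mul_sum]
          exact Finset.sum_congr rfl fun e _ => by ring
  -- The algebraic identity: bound = lb + ε
  have key : bound = lb + ε := by
    rcases le_total b1 mbar with h | h
    · rw [hε, hlb, hbound, min_eq_left h, max_eq_right h]
      field_simp
      ring
    · have hb1 : 1 ≤ b1 := le_trans hm1 h
      have hB0 : ((b1 : ℝ)) ≠ 0 := Nat.cast_ne_zero.mpr (by omega)
      rw [hε, hlb, hbound, min_eq_right h, max_eq_left h]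
      field_simp
      ring
  refine ⟨fun τ1 τ2 hτ1 hτ2 => ⟨?_, ?_⟩, fun τ2 hτ2 => UB τ2 hτ2⟩
  · have h1 := UB τ2 hτ2
    have h2 := LB σ1 hσ1
    linarith
  · have h3 := UB σ2 hσ2
    have h4 := LB τ1 hτ1
    linarith


end Stmt17
end

section
/- Exact equilibrium for the focused strategies: in the setting of Proposition 4 (Ē the set of components of maximal criticality w_max, Ē ≠ ℰ, Δ̄_w = w_max − w̄_max ≥ w_max b_1/n̄*, V̄* a minimum set cover of Ē with n̄* = |V̄*| ≥ b_1, Ē* a maximum set packing contained in Ē with m̄* = |Ē*|), if additionally n̄* = m̄*, then any strategy profile (σ̄_1^ε, σ̄_2^ε) satisfying ρ_{σ̄_1^ε}(v) = b_1/n̄* for v ∈ V̄*, ρ_{σ̄_1^ε}(v) = 0 for v ∉ V̄*, and σ̄_2^ε(e) = 1/m̄* for e ∈ Ē*, σ̄_2^ε(e) = 0 otherwise, is an exact Nash equilibrium of the game. -/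
open Finset

namespace Stmt18

/-- Expected loss `L(σ₁, σ₂)` of the monitoring game. -/
noncomputable def eLoss {V E : Type*} [Fintype V] [Fintype E] [DecidableEq E]
    (M : V → Finset E) (w : E → ℝ) (σ1 : Finset V → ℝ) (σ2 : E → ℝ) : ℝ :=
  ∑ S : Finset V, ∑ e : E, σ1 S * σ2 e * (if e ∈ S.biUnion M then 0 else w e)

/-- `σ` is a mixed strategy of Player 1 with budget `b₁`. -/
def IsMixed1 {V : Type*} [Fintype V] (b1 : ℕ) (σ : Finset V → ℝ) : Prop :=
  (∀ S, 0 ≤ σ S) ∧ (∑ S : Finset V, σ S = 1) ∧ ∀ S : Finset V, σ S ≠ 0 → S.card ≤ b1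

/-- `σ` is a mixed strategy of Player 2. -/
def IsMixed2 {E : Type*} [Fintype E] (σ : E → ℝ) : Prop :=
  (∀ e, 0 ≤ σ e) ∧ ∑ e : E, σ e = 1

/-- Marginal probability `ρ_σ(v)` that a sensor is placed at node `v`. -/
noncomputable def marginal {V : Type*} [Fintype V] [DecidableEq V]
    (σ : Finset V → ℝ) (v : V) : ℝ :=
  ∑ S : Finset V, if v ∈ S then σ S else 0

/-- Exact equilibrium for the focused strategies.  In the setting of
Proposition 4 (with `Ē` the set of components of maximal criticality `w_max`, `Ē ≠ ℰ`,
`Δ̄_w = w_max − w̄_max ≥ w_max b₁/n̄*`, `V̄*` a minimum set cover of `Ē` with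
`n̄* = |V̄*| ≥ b₁`, `Ē*` a maximum set packing contained in `Ē` with `m̄* = |Ē*|`),
if additionally `n̄* = m̄*`, then any strategy profile satisfying (11)–(12) is an exact
Nash equilibrium of the game. -/
theorem stmt18 {V E : Type*} [Fintype V] [DecidableEq V] [Fintype E] [DecidableEq E]
    [Nonempty E]
    (M : V → Finset E) (hMne : ∀ v, (M v).Nonempty)
    (hcov : ∀ e : E, ∃ v, e ∈ M v)
    (w : E → ℝ) (hw : ∀ e, 0 < w e ∧ w e ≤ 1)
    (b1 : ℕ)
    -- w_max and the set Ē of components of maximal criticality, with Ē ≠ ℰ: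
    (wmax : ℝ) (hwmax : wmax = Finset.univ.sup' Finset.univ_nonempty w)
    (Ebar : Finset E) (hEbar : Ebar = Finset.univ.filter (fun e => w e = wmax))
    (hEbarne : Ebar ≠ Finset.univ)
    (hcompl : (Finset.univ \ Ebar).Nonempty)
    -- w̄_max and the gap Δ̄_w:
    (wbar : ℝ) (hwbar : wbar = (Finset.univ \ Ebar).sup' hcompl w)
    (Δ : ℝ) (hΔ : Δ = wmax - wbar)
    -- V̄* is a minimum set cover of Ē, of cardinality n̄* ≥ b₁:
    (Vbar : Finset V) (hVcov : Ebar ⊆ Vbar.biUnion M)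
    (hVmin : ∀ S : Finset V, Ebar ⊆ S.biUnion M → Vbar.card ≤ S.card)
    (nbar : ℕ) (hn : nbar = Vbar.card) (hbn : b1 ≤ nbar)
    -- Ē* is a maximum set packing contained in Ē, of cardinality m̄* = n̄*:
    (Ebarstar : Finset E) (hEsub : Ebarstar ⊆ Ebar)
    (hEpack : ∀ v : V, (M v ∩ Ebarstar).card ≤ 1)
    (hEmax : ∀ F : Finset E, F ⊆ Ebar → (∀ v : V, (M v ∩ F).card ≤ 1) →
      F.card ≤ Ebarstar.card)
    (mbar : ℕ) (hm : mbar = Ebarstar.card) (hnm : nbar = mbar)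
    -- the gap condition Δ̄_w ≥ w_max b₁/n̄*:
    (hgap : wmax * (b1 : ℝ) / nbar ≤ Δ)
    -- the strategy profile (σ̄₁^ε, σ̄₂^ε) satisfying (11)–(12):
    (σ1 : Finset V → ℝ) (hσ1 : IsMixed1 b1 σ1)
    (hmarg : ∀ v : V, marginal σ1 v = if v ∈ Vbar then (b1 : ℝ) / nbar else 0)
    (σ2 : E → ℝ) (hσ2 : IsMixed2 σ2)
    (hσ2val : ∀ e : E, σ2 e = if e ∈ Ebarstar then 1 / (mbar : ℝ) else 0) :
    -- (σ̄₁^ε, σ̄₂^ε) is an exact Nash equilibrium: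
    (∀ τ2 : E → ℝ, IsMixed2 τ2 → eLoss M w σ1 τ2 ≤ eLoss M w σ1 σ2) ∧
    (∀ τ1 : Finset V → ℝ, IsMixed1 b1 τ1 → eLoss M w σ1 σ2 ≤ eLoss M w τ1 σ2) := by
  classical
  obtain ⟨hσ1pos, hσ1sum, hσ1supp⟩ := hσ1
  obtain ⟨hσ2pos, hσ2sum⟩ := hσ2
  have hwle : ∀ e : E, w e ≤ wmax := by
    intro e; rw [hwmax]; exact Finset.le_sup' w (mem_univ e)
  have hwmaxpos : 0 < wmax := lt_of_lt_of_le (hw (Classical.arbitrary E)).1 (hwle _)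
  have hEbarw : ∀ e ∈ Ebar, w e = wmax := by
    intro e he; rw [hEbar] at he; exact (mem_filter.mp he).2
  have hmpos : 0 < mbar := by
    rcases Nat.eq_zero_or_pos mbar with h0 | h
    · exfalso
      have hz : ∑ e : E, σ2 e = 0 := by
        apply Finset.sum_eq_zero; intro e _
        rw [hσ2val e, h0]; simp
      rw [hσ2sum] at hz; norm_num at hz
    · exact h
  have hnpos : 0 < nbar := hnm ▸ hmpos
  have hnR : (0:ℝ) < (nbar:ℝ) := Nat.cast_pos.mpr hnpos
  have hmR : (0:ℝ) < (mbar:ℝ) := Nat.cast_pos.mpr hmpos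
  have hnmR : (nbar:ℝ) = (mbar:ℝ) := by exact_mod_cast congrArg Nat.cast hnm
  set c : ℝ := wmax * (1 - (b1:ℝ)/(nbar:ℝ)) with hc
  -- (A): pure strategies S of Player 1 with card ≤ b1 lose at least c against σ2
  have hA : ∀ S : Finset V, S.card ≤ b1 →
      c ≤ ∑ e : E, σ2 e * (if e ∈ S.biUnion M then 0 else w e) := by
    intro S hS
    have hcard : (Ebarstar ∩ S.biUnion M).card ≤ b1 := by
      calc (Ebarstar ∩ S.biUnion M).card
          ≤ (S.biUnion (fun v => M v ∩ Ebarstar)).card := by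
            apply Finset.card_le_card
            intro e he
            rw [mem_inter, mem_biUnion] at he
            obtain ⟨he1, v, hv, hev⟩ := he
            exact mem_biUnion.mpr ⟨v, hv, mem_inter.mpr ⟨hev, he1⟩⟩
        _ ≤ ∑ v ∈ S, (M v ∩ Ebarstar).card := Finset.card_biUnion_le
        _ ≤ ∑ _v ∈ S, 1 := Finset.sum_le_sum (fun v _ => hEpack v)
        _ = S.card := by simp
        _ ≤ b1 := hS
    have hdiff : (mbar : ℝ) - (b1:ℝ) ≤ ((Ebarstar \ S.biUnion M).card : ℝ) := by
      have h1 : (Ebarstar ∩ S.biUnion M).card + (Ebarstar \ S.biUnion M).card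
          = Ebarstar.card := Finset.card_inter_add_card_sdiff Ebarstar (S.biUnion M)
      have h2 : mbar ≤ (Ebarstar \ S.biUnion M).card + b1 := by omega
      have := (Nat.cast_le (α := ℝ)).mpr h2
      push_cast at this
      linarith
    have hsum : (∑ e : E, σ2 e * (if e ∈ S.biUnion M then 0 else w e))
        = ∑ e ∈ Ebarstar \ S.biUnion M, wmax / (mbar:ℝ) := by
      rw [← Finset.sum_subset (Finset.subset_univ (Ebarstar \ S.biUnion M))]
      · apply Finset.sum_congr rfl
        intro e he
        rw [mem_sdiff] at he
        rw [hσ2val, if_pos he.1, if_neg he.2, hEbarw e (hEsub he.1)]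
        ring
      · intro e _ he
        rw [mem_sdiff] at he
        push_neg at he
        rw [hσ2val]
        by_cases h1 : e ∈ Ebarstar
        · rw [if_pos h1, if_pos (he h1)]; ring
        · rw [if_neg h1]; ring
    rw [hsum, Finset.sum_const, nsmul_eq_mul]
    have hceq : c = ((mbar:ℝ) - (b1:ℝ)) * (wmax / (mbar:ℝ)) := by
      rw [hc, hnmR]; field_simp
    rw [hceq]
    apply mul_le_mul_of_nonneg_right hdiff
    positivity
  -- (B): pure strategies e of Player 2 gain at most c against σ1
  have hB : ∀ e : E,
      (∑ S : Finset V, σ1 S * (if e ∈ S.biUnion M then 0 else w e)) ≤ c := by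
    intro e
    have hq : ∑ S : Finset V, σ1 S * (if e ∈ S.biUnion M then 0 else w e)
        = w e * ∑ S : Finset V, (if e ∈ S.biUnion M then 0 else σ1 S) := by
      rw [Finset.mul_sum]
      apply Finset.sum_congr rfl
      intro S _
      by_cases h : e ∈ S.biUnion M <;> simp [h] <;> ring
    rw [hq]
    set q := ∑ S : Finset V, (if e ∈ S.biUnion M then 0 else σ1 S) with hqdef
    have hq0 : 0 ≤ q := by
      apply Finset.sum_nonneg
      intro S _
      by_cases h : e ∈ S.biUnion M <;> simp [h, hσ1pos S]
    have hq1 : q ≤ 1 := by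
      rw [hqdef, ← hσ1sum]
      apply Finset.sum_le_sum
      intro S _
      by_cases h : e ∈ S.biUnion M <;> simp [h, hσ1pos S]
    by_cases he : e ∈ Ebar
    · obtain ⟨v, hvV, hev⟩ := mem_biUnion.mp (hVcov he)
      have hqv : q ≤ 1 - (b1:ℝ)/(nbar:ℝ) := by
        have hstep : q ≤ ∑ S : Finset V, (if v ∈ S then 0 else σ1 S) := by
          apply Finset.sum_le_sum
          intro S _
          by_cases h : v ∈ S
          · rw [if_pos h, if_pos (mem_biUnion.mpr ⟨v, h, hev⟩)]
          · rw [if_neg h]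
            by_cases h2 : e ∈ S.biUnion M <;> simp [h2, hσ1pos S]
        have hcomp : ∑ S : Finset V, (if v ∈ S then 0 else σ1 S)
            = 1 - marginal σ1 v := by
          rw [marginal, ← hσ1sum, eq_sub_iff_add_eq, ← Finset.sum_add_distrib]
          apply Finset.sum_congr rfl
          intro S _
          by_cases h : v ∈ S <;> simp [h]
        rw [hcomp, hmarg v, if_pos hvV] at hstep
        exact hstep
      rw [hEbarw e he, hc]
      exact mul_le_mul_of_nonneg_left hqv (le_of_lt hwmaxpos)
    · have hewbar : w e ≤ wbar := by
        rw [hwbar]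
        exact Finset.le_sup' w (mem_sdiff.mpr ⟨mem_univ e, he⟩)
      have hceq : c = wmax - wmax * (b1:ℝ) / (nbar:ℝ) := by rw [hc]; ring
      have hwbarc : wbar ≤ c := by rw [hceq]; linarith [hΔ ▸ hgap]
      calc w e * q ≤ w e * 1 := by
            exact mul_le_mul_of_nonneg_left hq1 (le_of_lt (hw e).1)
        _ = w e := mul_one _
        _ ≤ wbar := hewbar
        _ ≤ c := hwbarc
  -- rearranging eLoss
  have hswap : ∀ τ2 : E → ℝ, eLoss M w σ1 τ2
      = ∑ e : E, τ2 e * ∑ S : Finset V, σ1 S * (if e ∈ S.biUnion M then 0 else w e) := by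
    intro τ2
    rw [eLoss, Finset.sum_comm]
    apply Finset.sum_congr rfl
    intro e _
    rw [Finset.mul_sum]
    apply Finset.sum_congr rfl
    intro S _
    ring
  have hsplit : ∀ τ1 : Finset V → ℝ, eLoss M w τ1 σ2
      = ∑ S : Finset V, τ1 S * ∑ e : E, σ2 e * (if e ∈ S.biUnion M then 0 else w e) := by
    intro τ1
    rw [eLoss]
    apply Finset.sum_congr rfl
    intro S _
    rw [Finset.mul_sum]
    apply Finset.sum_congr rfl
    intro e _
    ring
  -- upper bound for any mixed τ2, lower bound for any mixed τ1
  have hub : ∀ τ2 : E → ℝ, IsMixed2 τ2 → eLoss M w σ1 τ2 ≤ c := by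
    intro τ2 ⟨hτpos, hτsum⟩
    rw [hswap τ2]
    calc ∑ e : E, τ2 e * ∑ S : Finset V, σ1 S * (if e ∈ S.biUnion M then 0 else w e)
        ≤ ∑ e : E, τ2 e * c :=
          Finset.sum_le_sum (fun e _ => mul_le_mul_of_nonneg_left (hB e) (hτpos e))
      _ = c := by rw [← Finset.sum_mul, hτsum, one_mul]
  have hlb : ∀ τ1 : Finset V → ℝ, IsMixed1 b1 τ1 → c ≤ eLoss M w τ1 σ2 := by
    intro τ1 ⟨hτpos, hτsum, hτsupp⟩
    rw [hsplit τ1]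
    calc c = ∑ S : Finset V, τ1 S * c := by rw [← Finset.sum_mul, hτsum, one_mul]
      _ ≤ ∑ S : Finset V, τ1 S * ∑ e : E, σ2 e * (if e ∈ S.biUnion M then 0 else w e) := by
          apply Finset.sum_le_sum
          intro S _
          by_cases h0 : τ1 S = 0
          · rw [h0, zero_mul, zero_mul]
          · exact mul_le_mul_of_nonneg_left (hA S (hτsupp S h0)) (hτpos S)
  constructor
  · intro τ2 hτ2
    exact le_trans (hub τ2 hτ2) (hlb σ1 ⟨hσ1pos, hσ1sum, hσ1supp⟩)
  · intro τ1 hτ1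
    exact le_trans (hub σ2 ⟨hσ2pos, hσ2sum⟩) (hlb τ1 hτ1)

end Stmt18
end
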